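/- arXiv:2503.13728 — 10 statements merged into one kernel-verified Lean document; each statement's English description precedes it below -/
import Mathlib

section
/- The linear orders ω, ω*, ω+1, and 1+ω* form a basis for the infinite (countable or not) linear orders under the epimorphism relation: for every infinite linear order L, there is a monotone surjection from L onto one of ω, ω*, ω+1, 1+ω*. -/
/-!
An infinite linear order contains a strictly increasing or a strictly decreasing sequence; up to
reversing the order, say a strictly increasing `a : ℕ → L`. Sending `x` to the least `n` with
`x ≤ a n` is monotone and maps `a k` to `k`. If the sequence is cofinal this is a surjection onto
`ω`; otherwise the points above the whole sequence are sent to `⊤`, giving a surjection onto `ω+1`.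
-/

open Function

namespace Monotone

variable {α β : Type*} [Preorder α] [Preorder β]

theorem exists_antitone_surjective_of_orderDual {f : αᵒᵈ → β} (hf : Monotone f)
    (hsurj : Surjective f) : ∃ g : α → β, Antitone g ∧ Surjective g :=
  ⟨f ∘ OrderDual.toDual, hf.comp_antitone fun _ _ h => h, hsurj.comp OrderDual.toDual.surjective⟩

end Monotone

section SeqRank

variable {α : Type*} [Preorder α]

noncomputable def seqRank (a : ℕ → α) (x : α) : ℕ∞ :=
  ⨅ (n : ℕ) (_ : x ≤ a n), (n : ℕ∞)

theorem seqRank_mono (a : ℕ → α) : Monotone (seqRank a) :=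
  fun _ _ hxy => le_iInf₂ fun n hn => iInf₂_le n (hxy.trans hn)

theorem seqRank_le {a : ℕ → α} {x : α} {n : ℕ} (h : x ≤ a n) : seqRank a x ≤ n :=
  iInf₂_le n h

theorem seqRank_ne_top {a : ℕ → α} {x : α} {n : ℕ} (h : x ≤ a n) : seqRank a x ≠ ⊤ :=
  ne_top_of_le_ne_top (ENat.natCast_ne_top n) (seqRank_le h)

theorem seqRank_eq_top {a : ℕ → α} {x : α} (h : ∀ n, a n < x) : seqRank a x = ⊤ := by
  simp [seqRank, fun n => (h n).not_ge]

end SeqRank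

section StrictMono

variable {α : Type*} [LinearOrder α]

theorem StrictMono.seqRank_apply {a : ℕ → α} (ha : StrictMono a) (k : ℕ) :
    seqRank a (a k) = k :=
  le_antisymm (seqRank_le le_rfl) (le_iInf₂ fun _ hn => Nat.cast_le.mpr (ha.le_iff_le.mp hn))

theorem StrictMono.exists_monotone_surjective {a : ℕ → α} (ha : StrictMono a) :
    (∃ f : α → ℕ, Monotone f ∧ Surjective f) ∨
    (∃ f : α → WithTop ℕ, Monotone f ∧ Surjective f) := by
  by_cases hcofinal : ∀ x, ∃ n, x ≤ a n
  · refine Or.inl ⟨fun x => (seqRank a x).toNat, fun x y hxy => ?_, fun k => ⟨a k, ?_⟩⟩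
    · obtain ⟨n, hn⟩ := hcofinal y
      exact ENat.toNat_le_toNat (seqRank_mono a hxy) (seqRank_ne_top hn)
    · simp [ha.seqRank_apply k]
  · push Not at hcofinal
    obtain ⟨x₀, hx₀⟩ := hcofinal
    refine Or.inr ⟨seqRank a, seqRank_mono a, fun m => ?_⟩
    induction m with
    | top => exact ⟨x₀, seqRank_eq_top hx₀⟩
    | coe k => exact ⟨a k, ha.seqRank_apply k⟩

end StrictMono

/-- `ω`, `ω*`, `ω+1` and `1+ω*` form a basis for the infinite linear orders under the
epimorphism relation: every infinite linear order admits a monotone surjection onto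
`ℕ`, an antitone surjection onto `ℕ` (i.e. a monotone surjection onto `ω*`),
a monotone surjection onto `ω+1 = WithTop ℕ`, or an antitone surjection onto
`WithTop ℕ` (i.e. a monotone surjection onto `1+ω*`). -/
theorem epi_basis_infinite_linear_orders {L : Type*} [LinearOrder L] [Infinite L] :
    (∃ f : L → ℕ, Monotone f ∧ Function.Surjective f) ∨
    (∃ f : L → ℕ, Antitone f ∧ Function.Surjective f) ∨
    (∃ f : L → WithTop ℕ, Monotone f ∧ Function.Surjective f) ∨
    (∃ f : L → WithTop ℕ, Antitone f ∧ Function.Surjective f) := by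
  obtain ⟨a, ha | ha⟩ := Infinite.exists_strictMono_or_strictAnti L
  · rcases ha.exists_monotone_surjective with ⟨f, hf, hsurj⟩ | ⟨f, hf, hsurj⟩
    · exact Or.inl ⟨f, hf, hsurj⟩
    · exact Or.inr (Or.inr (Or.inl ⟨f, hf, hsurj⟩))
  · rcases ha.dual_right.exists_monotone_surjective with ⟨f, hf, hsurj⟩ | ⟨f, hf, hsurj⟩
    · exact Or.inr (Or.inl (hf.exists_antitone_surjective_of_orderDual hsurj))
    · exact Or.inr (Or.inr (Or.inr (hf.exists_antitone_surjective_of_orderDual hsurj)))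
end

section
/- If A and B are short linear orders, A' ⊴ A and B' ⊴ B with A' and B' nonempty, then A' × B' ⊴ A × B, where products carry the lexicographic order. -/
/-!
A short nonempty linear order carries a monotone sequence indexed by `ℤ` that is cofinal and
coinitial: if no sequence were cofinal, every countable set would have a strict upper bound, and
transfinite recursion would build a strictly increasing `ω₁`-sequence. With such sequences `ι` in
`I` and `e` in `C`, the copy of `C` sitting over `ι k` in `I ×ₗ C` is clamped onto
`[e (k - 1), e k]` and every copy in between collapses to a point, so `C ⊴ I ×ₗ C`. Each fibre of
`f` is short as a suborder of `A`, and `B'` is short as a monotone image of `B`; applying this to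
every fibre and gluing the resulting maps along `f` gives `A' ×ₗ B' ⊴ A ×ₗ B`.
-/

/-- A linear order is short if neither `ω₁` nor `ω₁*` embeds into it. -/
def IsShort (L : Type*) [LinearOrder L] : Prop :=
  (¬ ∃ f : {o : Ordinal.{0} // o < (Cardinal.aleph 1).ord} → L, StrictMono f) ∧
  (¬ ∃ f : {o : Ordinal.{0} // o < (Cardinal.aleph 1).ord} → L, StrictAnti f)

open Function OrderDual

theorem exists_strictMono_of_countable_Iio {W L : Type*} [Preorder W] [WellFoundedLT W]
    [Preorder L] (hW : ∀ w : W, (Set.Iio w).Countable)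
    (hL : ∀ s : Set L, s.Countable → ∃ x, ∀ y ∈ s, y < x) : ∃ f : W → L, StrictMono f := by
  choose bound hbound using hL
  let f : W → L := wellFounded_lt.fix fun w f' =>
    have := (hW w).to_subtype
    bound (Set.range fun v : Set.Iio w => f' v v.2) (Set.countable_range _)
  refine ⟨f, fun v w hvw => ?_⟩
  rw [show f w = _ from wellFounded_lt.fix_eq _ w]
  exact hbound _ _ _ ⟨⟨v, hvw⟩, rfl⟩

theorem countable_Iio_omega_one (w : {o : Ordinal.{0} // o < (Cardinal.aleph 1).ord}) :
    (Set.Iio w).Countable := by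
  have : (Set.Iio w.1).Countable := by
    rw [← Cardinal.le_aleph0_iff_set_countable, Cardinal.mk_Iio_ordinal, Cardinal.lift_le_aleph0,
      ← Cardinal.lt_aleph_one_iff]
    exact Cardinal.lt_ord.1 w.2
  exact this.preimage Subtype.val_injective

theorem exists_nat_cofinal_of_not_exists_strictMono {L : Type*} [LinearOrder L] [Nonempty L]
    (h : ¬ ∃ f : {o : Ordinal.{0} // o < (Cardinal.aleph 1).ord} → L, StrictMono f) :
    ∃ u : ℕ → L, ∀ x, ∃ n, x ≤ u n := by
  by_contra! hu
  refine h (exists_strictMono_of_countable_Iio countable_Iio_omega_one fun s hs => ?_)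
  rcases s.eq_empty_or_nonempty with rfl | hne
  · exact ⟨Classical.arbitrary L, by simp⟩
  obtain ⟨u, rfl⟩ := hs.exists_eq_range hne
  obtain ⟨x, hx⟩ := hu u
  exact ⟨x, Set.forall_mem_range.2 hx⟩

namespace IsShort

variable {L M : Type*} [LinearOrder L] [LinearOrder M]

theorem of_strictMono {φ : L → M} (hφ : StrictMono φ) (h : IsShort M) : IsShort L :=
  ⟨fun ⟨u, hu⟩ => h.1 ⟨φ ∘ u, hφ.comp hu⟩, fun ⟨u, hu⟩ => h.2 ⟨φ ∘ u, hφ.comp_strictAnti hu⟩⟩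

theorem dual (h : IsShort L) : IsShort Lᵒᵈ :=
  ⟨fun ⟨u, hu⟩ => h.2 ⟨ofDual ∘ u, hu.dual_right⟩, fun ⟨u, hu⟩ => h.1 ⟨ofDual ∘ u, hu.dual_right⟩⟩

end IsShort

theorem Monotone.strictMono_surjInv {α β : Type*} [LinearOrder α] [Preorder β] {f : α → β}
    (hf : Monotone f) (hfs : Surjective f) : StrictMono (surjInv hfs) :=
  fun x y hxy => hf.reflect_lt (by rwa [surjInv_eq hfs, surjInv_eq hfs])

theorem exists_monotone_int_cofinal_coinitial_of_nat {L : Type*} [LinearOrder L] (u : ℕ → L)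
    (v : ℕ → Lᵒᵈ) (hu : ∀ x, ∃ n, x ≤ u n) (hv : ∀ x, ∃ n, x ≤ v n) :
    ∃ e : ℤ → L, Monotone e ∧ (∀ x, ∃ n, x ≤ e n) ∧ ∀ x, ∃ n, e n ≤ x := by
  refine ⟨fun n => if 0 ≤ n then partialSups u n.toNat
    else min (u 0) (ofDual (partialSups v (-n).toNat)), fun m n hmn => ?_, fun x => ?_, fun x => ?_⟩
  · dsimp only
    split_ifs with hm hn hn
    · exact (partialSups u).monotone (Int.toNat_le_toNat hmn)
    · omega
    · exact (min_le_left _ _).trans (le_partialSups_of_le u (Nat.zero_le _))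
    · exact min_le_min le_rfl ((partialSups v).monotone (by omega))
  · obtain ⟨n, hn⟩ := hu x
    exact ⟨n, by simpa using hn.trans (le_partialSups u n)⟩
  · obtain ⟨n, hn⟩ := hv (toDual x)
    refine ⟨-n - 1, ?_⟩
    dsimp only
    rw [if_neg (by omega), show (-(-(n : ℤ) - 1)).toNat = n + 1 by omega]
    exact (min_le_right _ _).trans ((le_partialSups_of_le v n.le_succ).trans' hn)

theorem IsShort.exists_monotone_int_cofinal_coinitial {L : Type*} [LinearOrder L] [Nonempty L]
    (h : IsShort L) :
    ∃ e : ℤ → L, Monotone e ∧ (∀ x, ∃ n, x ≤ e n) ∧ ∀ x, ∃ n, e n ≤ x := by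
  obtain ⟨u, hu⟩ := exists_nat_cofinal_of_not_exists_strictMono h.1
  obtain ⟨v, hv⟩ := exists_nat_cofinal_of_not_exists_strictMono h.dual.1
  exact exists_monotone_int_cofinal_coinitial_of_nat u v hu hv

section WindowClamp

variable {I C : Type*} [LinearOrder I] [LinearOrder C] {ι : ℤ → I} {e : ℤ → C}

theorem bddAbove_setOf_lt_of_le (hι : Monotone ι) {i : I} {N : ℤ} (hN : i ≤ ι N) :
    BddAbove {n | ι n < i} :=
  ⟨N, fun _ hn => (hι.reflect_lt (lt_of_lt_of_le hn hN)).le⟩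

theorem bddAbove_setOf_le_of_lt (hι : Monotone ι) {i : I} {N : ℤ} (hN : i < ι N) :
    BddAbove {n | ι n ≤ i} :=
  ⟨N, fun _ hn => (hι.reflect_lt (lt_of_le_of_lt hn hN)).le⟩

theorem exists_sub_one_le_le (he : Monotone e) (hcof : ∀ c, ∃ n, c ≤ e n)
    (hcoi : ∀ c, ∃ n, e n ≤ c) (c : C) : ∃ k, e (k - 1) ≤ c ∧ c ≤ e k := by
  by_cases h : ∃ n, e n < c
  · obtain ⟨N, hN⟩ := hcof c
    have hbdd := bddAbove_setOf_lt_of_le he hN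
    have hlt : e (sSup {n | e n < c}) < c := Int.csSup_mem h hbdd
    refine ⟨sSup {n | e n < c} + 1, by simpa using hlt.le, ?_⟩
    by_contra! hnext
    exact (lt_add_one _).not_ge (le_csSup hbdd hnext)
  · simp only [not_exists, not_lt] at h
    obtain ⟨k, hk⟩ := hcoi c
    exact ⟨k, (he (sub_one_lt k).le).trans hk, h k⟩

open Classical in
/-- Clamps `c` into the window `[e lo, e hi]`, where `lo` (resp. `hi`) is the last index with
`ι n < i` (resp. `ι n ≤ i`); a bound whose index set is empty or unbounded is dropped. Windows of
`i < i'` lie below one another, and the window of `ι k` contains `[e (k - 1), e k]`. -/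
noncomputable def windowClamp (ι : ℤ → I) (e : ℤ → C) (i : I) (c : C) : C :=
  let c' := if ∃ n, ι n < i then max (e (sSup {n | ι n < i})) c else c
  if ∃ n, i < ι n then min (e (sSup {n | ι n ≤ i})) c' else c'

theorem monotone_windowClamp (i : I) : Monotone (windowClamp ι e i) := by
  intro c c' h
  simp only [windowClamp]
  split_ifs <;> gcongr

theorem windowClamp_le {i : I} (h : ∃ n, i < ι n) (c : C) :
    windowClamp ι e i c ≤ e (sSup {n | ι n ≤ i}) := by
  simp only [windowClamp, if_pos h]
  exact min_le_left _ _

theorem le_windowClamp (hι : Monotone ι) (hcof : ∀ i, ∃ n, i ≤ ι n) (he : Monotone e) {i : I}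
    (h : ∃ n, ι n < i) (c : C) : e (sSup {n | ι n < i}) ≤ windowClamp ι e i c := by
  obtain ⟨N, hN⟩ := hcof i
  simp only [windowClamp, if_pos h]
  split_ifs with h'
  · obtain ⟨M, hM⟩ := h'
    have hlo := Int.csSup_mem h (bddAbove_setOf_lt_of_le hι hN)
    exact le_min (he (le_csSup (bddAbove_setOf_le_of_lt hι hM) (le_of_lt hlo))) (le_max_left _ _)
  · exact le_max_left _ _

theorem windowClamp_le_windowClamp (hι : Monotone ι) (hcof : ∀ i, ∃ n, i ≤ ι n)
    (hcoi : ∀ i, ∃ n, ι n ≤ i) (he : Monotone e) {i i' : I} (hii' : i < i') (c c' : C) :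
    windowClamp ι e i c ≤ windowClamp ι e i' c' := by
  obtain ⟨N, hN⟩ := hcof i'
  obtain ⟨M, hM⟩ := hcoi i
  have hi : ι (sSup {n | ι n ≤ i}) ≤ i :=
    Int.csSup_mem ⟨M, hM⟩ (bddAbove_setOf_le_of_lt hι (hii'.trans_le hN))
  calc windowClamp ι e i c ≤ e (sSup {n | ι n ≤ i}) := windowClamp_le ⟨N, hii'.trans_le hN⟩ c
    _ ≤ e (sSup {n | ι n < i'}) :=
      he (le_csSup (bddAbove_setOf_lt_of_le hι hN) (hi.trans_lt hii'))
    _ ≤ windowClamp ι e i' c' := le_windowClamp hι hcof he ⟨M, hM.trans_lt hii'⟩ c'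

theorem windowClamp_eq_self (hι : Monotone ι) (he : Monotone e) {k : ℤ} {c : C}
    (hk : e (k - 1) ≤ c) (hk' : c ≤ e k) : windowClamp ι e (ι k) c = c := by
  have lo_le (h : ∃ n, ι n < ι k) : e (sSup {n | ι n < ι k}) ≤ c :=
    (he (csSup_le h fun n hn => by have := hι.reflect_lt hn; omega)).trans hk
  have le_hi : (∃ n, ι k < ι n) → c ≤ e (sSup {n | ι n ≤ ι k}) := fun ⟨_, hN⟩ =>
    hk'.trans (he (le_csSup (bddAbove_setOf_le_of_lt hι hN) le_rfl))
  simp only [windowClamp]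
  split_ifs with hhi hlo hlo
  · rw [max_eq_right (lo_le hlo), min_eq_right (le_hi hhi)]
  · exact min_eq_right (le_hi hhi)
  · exact max_eq_right (lo_le hlo)
  · rfl

end WindowClamp

theorem Prod.Lex.monotone_uncurry_ofLex {α β γ : Type*} [Preorder α] [Preorder β] [Preorder γ]
    {φ : α → β → γ} (hmono : ∀ a, Monotone (φ a))
    (hlt : ∀ a₁ a₂, a₁ < a₂ → ∀ b₁ b₂, φ a₁ b₁ ≤ φ a₂ b₂) : Monotone (uncurry φ ∘ ofLex) := by
  intro p q hpq
  rcases Prod.Lex.le_iff.1 hpq with h | ⟨h, h'⟩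
  · exact hlt _ _ h _ _
  · simp only [comp_apply, uncurry, h]
    exact hmono _ h'

theorem Prod.Lex.monotone_map_right {α β γ : Type*} [Preorder α] [Preorder β] [Preorder γ]
    {g : β → γ} (hg : Monotone g) : Monotone (toLex ∘ Prod.map id g ∘ ofLex : α ×ₗ β → α ×ₗ γ) :=
  Prod.Lex.monotone_uncurry_ofLex (φ := fun a b => toLex (a, g b))
    (fun _ _ _ h => Prod.Lex.toLex_le_toLex.2 (Or.inr ⟨rfl, hg h⟩))
    fun _ _ h _ _ => Prod.Lex.toLex_le_toLex.2 (Or.inl h)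

theorem Prod.Lex.surjective_map_right {α β γ : Type*} {g : β → γ} (hg : Surjective g) :
    Surjective (toLex ∘ Prod.map id g ∘ ofLex : α ×ₗ β → α ×ₗ γ) :=
  toLex.surjective.comp ((surjective_id.prodMap hg).comp ofLex.surjective)

theorem IsShort.exists_monotone_surjective_lex {I C : Type*} [LinearOrder I] [LinearOrder C]
    [Nonempty I] [Nonempty C] (hI : IsShort I) (hC : IsShort C) :
    ∃ ψ : I ×ₗ C → C, Monotone ψ ∧ Surjective ψ := by
  obtain ⟨ι, hι, hιcof, hιcoi⟩ := hI.exists_monotone_int_cofinal_coinitial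
  obtain ⟨e, he, hecof, hecoi⟩ := hC.exists_monotone_int_cofinal_coinitial
  refine ⟨uncurry (windowClamp ι e) ∘ ofLex, Prod.Lex.monotone_uncurry_ofLex monotone_windowClamp
    fun i i' h c c' => windowClamp_le_windowClamp hι hιcof hιcoi he h c c', fun c => ?_⟩
  obtain ⟨k, hk, hk'⟩ := exists_sub_one_le_le he hecof hecoi c
  exact ⟨toLex (ι k, c), windowClamp_eq_self hι he hk hk'⟩

theorem exists_monotone_surjective_lex_of_fibers {A A' B B' : Type*} [Preorder A]
    [PartialOrder A'] [Preorder B] [Preorder B'] {f : A → A'} (hf : Monotone f)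
    (ψ : ∀ a', {a // f a = a'} ×ₗ B → B') (hψ : ∀ a', Monotone (ψ a'))
    (hψs : ∀ a', Surjective (ψ a')) : ∃ h : A ×ₗ B → A' ×ₗ B', Monotone h ∧ Surjective h := by
  let Ψ (a : A) (b : B) : B' := ψ (f a) (toLex (⟨a, rfl⟩, b))
  have Ψ_eq {a : A} {a' : A'} (ha : f a = a') (b : B) : Ψ a b = ψ a' (toLex (⟨a, ha⟩, b)) := by
    subst ha; rfl
  refine ⟨uncurry (fun a b => toLex (f a, Ψ a b)) ∘ ofLex,
    Prod.Lex.monotone_uncurry_ofLex (fun a b b' hb => ?_) (fun a₁ a₂ ha b₁ b₂ => ?_),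
    toLex.surjective.forall.2 fun ⟨a', b'⟩ => ?_⟩
  · refine Prod.Lex.toLex_le_toLex.2 (Or.inr ⟨rfl, hψ _ ?_⟩)
    exact Prod.Lex.toLex_le_toLex.2 (Or.inr ⟨rfl, hb⟩)
  · rcases (hf ha.le).lt_or_eq with hlt | heq
    · exact Prod.Lex.toLex_le_toLex.2 (Or.inl hlt)
    · refine Prod.Lex.toLex_le_toLex.2 (Or.inr ⟨heq, ?_⟩)
      rw [Ψ_eq heq, Ψ_eq rfl]
      exact hψ _ (Prod.Lex.toLex_le_toLex.2 (Or.inl ha))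
  · obtain ⟨⟨⟨a, ha⟩, b⟩, hx⟩ := hψs a' b'
    refine ⟨toLex (a, b), ?_⟩
    simp only [comp_apply, ofLex_toLex, uncurry_apply_pair, Ψ_eq ha]
    exact congrArg toLex (Prod.ext ha hx)

theorem epi_lex_prod_general {A B A' B' : Type*} [LinearOrder A] [LinearOrder B]
    [LinearOrder A'] [LinearOrder B'] [Nonempty B']
    (hA : IsShort A) (hB : IsShort B)
    (f : A → A') (hf : Monotone f) (hfs : Function.Surjective f)
    (g : B → B') (hg : Monotone g) (hgs : Function.Surjective g) :
    ∃ h : A ×ₗ B → A' ×ₗ B', Monotone h ∧ Function.Surjective h := by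
  have hB' : IsShort B' := hB.of_strictMono (hg.strictMono_surjInv hgs)
  have fibers (a' : A') : ∃ ψ : {a // f a = a'} ×ₗ B → B', Monotone ψ ∧ Surjective ψ := by
    have : Nonempty {a // f a = a'} := nonempty_subtype.2 (hfs a')
    have hfiber : IsShort {a // f a = a'} := hA.of_strictMono (φ := Subtype.val) fun _ _ h => h
    obtain ⟨ψ, hψ, hψs⟩ := hfiber.exists_monotone_surjective_lex hB'
    exact ⟨ψ ∘ toLex ∘ Prod.map id g ∘ ofLex, hψ.comp (Prod.Lex.monotone_map_right hg),
      hψs.comp (Prod.Lex.surjective_map_right hgs)⟩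
  choose ψ hψ hψs using fibers
  exact exists_monotone_surjective_lex_of_fibers hf ψ hψ hψs

/-- If `A` and `B` are short linear orders, and `A'`, `B'` are nonempty epimorphic images
of `A`, `B` respectively, then the lexicographic product `A' ×ₗ B'` is an epimorphic image
of `A ×ₗ B`. -/
theorem epi_lex_prod {A B A' B' : Type*} [LinearOrder A] [LinearOrder B]
    [LinearOrder A'] [LinearOrder B'] [Nonempty A'] [Nonempty B']
    (hA : IsShort A) (hB : IsShort B)
    (f : A → A') (hf : Monotone f) (hfs : Function.Surjective f)
    (g : B → B') (hg : Monotone g) (hgs : Function.Surjective g) :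
    ∃ h : A ×ₗ B → A' ×ₗ B', Monotone h ∧ Function.Surjective h :=
  epi_lex_prod_general hA hB f hf hfs g hg hgs
end

section
/- If A and B are short strongly surjective linear orders, then the lexicographic product A × B is strongly surjective. -/
/-- A linear order is strongly surjective if it surjects monotonically onto each of its
nonempty suborders. -/
def StronglySurjective (L : Type*) [LinearOrder L] : Prop :=
  ∀ S : Set L, S.Nonempty → ∃ f : L → S, Monotone f ∧ Function.Surjective f

notation "Ω₁" => {o : (Ordinal : Type 1) // o < Cardinal.ord (Cardinal.aleph 1)}

open Set Function

theorem countable_Iio_omega1 (o : Ω₁) : (Iio o).Countable := by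
  have : (Iio o.1).Countable := by
    rw [← Cardinal.le_aleph0_iff_set_countable, Cardinal.mk_Iio_ordinal, Cardinal.lift_le_aleph0,
      ← Cardinal.lt_aleph_one_iff]
    exact Cardinal.lt_ord.mp o.2
  exact this.preimage Subtype.val_injective

section Cofinal

variable {L : Type*} [LinearOrder L]

theorem exists_strictMono_omega1 (h : ∀ D : Set L, D.Countable → ∃ t, ∀ d ∈ D, d < t) :
    ∃ f : Ω₁ → L, StrictMono f := by
  choose next hnext using h
  have : ∀ o : Ω₁, Countable (Iio o) := fun o => (countable_Iio_omega1 o).to_subtype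
  let f : Ω₁ → L := wellFounded_lt.fix fun o IH =>
    next (range fun o' : Iio o => IH o'.1 o'.2) (countable_range _)
  have hf : ∀ o, f o = next (range fun o' : Iio o => f o'.1) (countable_range _) :=
    wellFounded_lt.fix_eq _
  refine ⟨f, fun o' o h => ?_⟩
  rw [hf o]
  exact hnext _ _ _ ⟨⟨o', h⟩, rfl⟩

theorem exists_countable_cofinal (hL : ¬ ∃ f : Ω₁ → L, StrictMono f) (T : Set L) :
    ∃ D ⊆ T, D.Countable ∧ ∀ t ∈ T, ∃ d ∈ D, t ≤ d := by
  by_contra! hT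
  obtain ⟨f, hf⟩ := exists_strictMono_omega1 (L := T) fun D hD => by
    obtain ⟨t, htT, ht⟩ := hT (Subtype.val '' D) (by simp) (hD.image _)
    exact ⟨⟨t, htT⟩, fun d hd => ht d (mem_image_of_mem _ hd)⟩
  exact hL ⟨_, (Subtype.strictMono_coe _).comp hf⟩

theorem exists_strictMono_nat_cofinal (hL : ¬ ∃ f : Ω₁ → L, StrictMono f) {T : Set L}
    {t₀ : L} (ht₀ : t₀ ∈ T) (hT : ∀ t ∈ T, ∃ t' ∈ T, t < t') :
    ∃ f : ℕ → L, f 0 = t₀ ∧ (∀ n, f n ∈ T) ∧ StrictMono f ∧ ∀ t ∈ T, ∃ n, t ≤ f n := by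
  obtain ⟨D, hDT, hDc, hD⟩ := exists_countable_cofinal hL T
  obtain ⟨d, hd⟩ := (hDc.insert t₀).exists_eq_range (insert_nonempty _ _)
  have hdT : ∀ n, d n ∈ T := fun n => insert_subset ht₀ hDT (hd ▸ mem_range_self n)
  have hstep : ∀ x : T, ∀ n, ∃ y : T, (x : L) < y ∧ d n < y := fun x n => by
    obtain ⟨y, hyT, hy⟩ := hT (max (x : L) (d n)) (max_rec' T x.2 (hdT n))
    exact ⟨⟨y, hyT⟩, (le_max_left _ _).trans_lt hy, (le_max_right _ _).trans_lt hy⟩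
  choose next hnext hnext' using hstep
  let F : ℕ → T := fun n => Nat.rec (motive := fun _ => T) ⟨t₀, ht₀⟩ (fun n x => next x n) n
  have hF : StrictMono fun n => (F n : L) :=
    strictMono_nat_of_lt_succ fun n => hnext (F n) n
  refine ⟨fun n => F n, rfl, fun n => (F n).2, hF, fun t ht => ?_⟩
  obtain ⟨e, he, hte⟩ := hD t ht
  obtain ⟨n, rfl⟩ : e ∈ range d := hd ▸ mem_insert_of_mem _ he
  exact ⟨n + 1, hte.trans (hnext' _ _).le⟩

end Cofinal

theorem Monotone.exists_le_le_succ {γ : Type*} [LinearOrder γ] {f : ℕ → γ} (hf : Monotone f)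
    {t : γ} {n : ℕ} (h₀ : f 0 ≤ t) (hn : t ≤ f n) : ∃ m, f m ≤ t ∧ t ≤ f (m + 1) := by
  induction n with
  | zero => exact ⟨0, h₀, hn.trans (hf (Nat.zero_le 1))⟩
  | succ n ih =>
    rcases le_total t (f n) with h | h
    · exact ih h
    · exact ⟨n, h, hn⟩

structure IsOrderedCover {α γ : Type*} [LT α] [LE γ] (D : Set α) (p : α → Set γ) (T : Set γ) :
    Prop where
  nonempty : ∀ x ∈ D, (p x).Nonempty
  subset : ∀ x ∈ D, p x ⊆ T
  le : ∀ x ∈ D, ∀ y ∈ D, x < y → ∀ b ∈ p x, ∀ b' ∈ p y, b ≤ b'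
  covers : ∀ t ∈ T, ∃ x ∈ D, t ∈ p x

namespace IsOrderedCover

variable {α γ : Type*}

theorem of_dual [LT α] [LE γ] {D : Set α} {T : Set γ} {p : αᵒᵈ → Set γᵒᵈ}
    (h : IsOrderedCover (OrderDual.ofDual ⁻¹' D) p (OrderDual.ofDual ⁻¹' T)) :
    IsOrderedCover D (fun x => OrderDual.toDual ⁻¹' p (OrderDual.toDual x)) T where
  nonempty := h.nonempty
  subset := h.subset
  le _ hx _ hy hxy b hb b' hb' := h.le _ hy _ hx hxy b' hb' b hb
  covers := h.covers

theorem union_Iic_Ici [LinearOrder α] [LinearOrder γ] {D : Set α} {T : Set γ} {x₀ : α}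
    {t₀ : γ} {p q : α → Set γ} (hp : IsOrderedCover (D ∩ Iic x₀) p (T ∩ Iic t₀))
    (hq : IsOrderedCover (D ∩ Ici x₀) q (T ∩ Ici t₀)) :
    IsOrderedCover D (fun x => {b | x ≤ x₀ ∧ b ∈ p x} ∪ {b | x₀ ≤ x ∧ b ∈ q x}) T where
  nonempty x hx := by
    rcases le_total x x₀ with h | h
    · obtain ⟨b, hb⟩ := hp.nonempty x ⟨hx, h⟩
      exact ⟨b, .inl ⟨h, hb⟩⟩
    · obtain ⟨b, hb⟩ := hq.nonempty x ⟨hx, h⟩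
      exact ⟨b, .inr ⟨h, hb⟩⟩
  subset := by
    rintro x hx b (⟨h, hb⟩ | ⟨h, hb⟩)
    exacts [(hp.subset x ⟨hx, h⟩ hb).1, (hq.subset x ⟨hx, h⟩ hb).1]
  le := by
    rintro x hx y hy hxy b (⟨hx₀, hb⟩ | ⟨hx₀, hb⟩) b' (⟨hy₀, hb'⟩ | ⟨hy₀, hb'⟩)
    · exact hp.le x ⟨hx, hx₀⟩ y ⟨hy, hy₀⟩ hxy b hb b' hb'
    · exact (hp.subset x ⟨hx, hx₀⟩ hb).2.trans (hq.subset y ⟨hy, hy₀⟩ hb').2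
    · exact absurd (hx₀.trans_lt (hxy.trans_le hy₀)) (lt_irrefl x₀)
    · exact hq.le x ⟨hx, hx₀⟩ y ⟨hy, hy₀⟩ hxy b hb b' hb'
  covers t ht := by
    rcases le_total t t₀ with h | h
    · obtain ⟨x, hx, htx⟩ := hp.covers t ⟨ht, h⟩
      exact ⟨x, hx.1, .inl ⟨hx.2, htx⟩⟩
    · obtain ⟨x, hx, htx⟩ := hq.covers t ⟨ht, h⟩
      exact ⟨x, hx.1, .inr ⟨hx.2, htx⟩⟩

end IsOrderedCover

section Construction

variable {α β γ : Type*}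

theorem exists_isOrderedCover_of_isGreatest_of_isLeast [Preorder α] [Preorder γ] {D : Set α}
    {T : Set γ} {x₁ : α} {t₀ : γ} (hD : IsGreatest D x₁) (hT : IsLeast T t₀) :
    ∃ p, IsOrderedCover D p T := by
  classical
  have hsub : ∀ x, (if x = x₁ then T else {t₀}) ⊆ T := fun x => by
    split_ifs
    exacts [subset_rfl, singleton_subset_iff.2 hT.1]
  refine ⟨fun x => if x = x₁ then T else {t₀}, fun x _ => ?_, fun x _ => hsub x,
    fun x _ y hy hxy b hb b' hb' => ?_, fun t ht => ⟨x₁, hD.1, by simpa using ht⟩⟩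
  · split_ifs
    exacts [⟨t₀, hT.1⟩, singleton_nonempty t₀]
  · have hx : x ≠ x₁ := (hxy.trans_le (hD.2 hy)).ne
    obtain rfl : b = t₀ := by simpa [hx] using hb
    exact hT.2 (hsub y hb')

theorem exists_isOrderedCover_of_isLeast_of_isGreatest [Preorder α] [Preorder γ] {D : Set α}
    {T : Set γ} {x₀ : α} {t₁ : γ} (hD : IsLeast D x₀) (hT : IsGreatest T t₁) :
    ∃ p, IsOrderedCover D p T :=
  let ⟨_, hp⟩ := exists_isOrderedCover_of_isGreatest_of_isLeast hD.dual hT.dual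
  ⟨_, hp.of_dual⟩

theorem exists_isOrderedCover_of_seq [Preorder α] [LinearOrder γ] {D : Set α} {T : Set γ}
    {g : ℕ → α} {f : ℕ → γ} (hg : StrictMono g) (hgD : ∀ n, g n ∈ D)
    (hg_cof : ∀ x ∈ D, ∃ n, x ≤ g n) (hf : Monotone f) (hfT : ∀ n, f n ∈ T)
    (hf₀ : ∀ t ∈ T, f 0 ≤ t) (hf_cof : ∀ t ∈ T, ∃ n, t ≤ f n) :
    ∃ p, IsOrderedCover D p T := by
  classical
  let idx : α → ℕ := fun x => sInf {n | x ≤ g n}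
  have le_idx : ∀ x ∈ D, x ≤ g (idx x) := fun x hx => Nat.sInf_mem (hg_cof x hx)
  have idx_le : ∀ {x n}, x ≤ g n → idx x ≤ n := fun h => Nat.sInf_le h
  have idx_g : ∀ n, idx (g n) = n := fun n =>
    (idx_le le_rfl).antisymm (hg.le_iff_le.1 (le_idx _ (hgD n)))
  let p : α → Set γ := fun x =>
    if x = g (idx x) then T ∩ Icc (f (idx x)) (f (idx x + 1)) else {f (idx x)}
  have mem_p : ∀ x, f (idx x) ∈ p x := fun x => by
    dsimp only [p]
    split_ifs
    exacts [⟨hfT _, le_rfl, hf (Nat.le_succ _)⟩, rfl]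
  have p_bounds : ∀ x, ∀ b ∈ p x, f (idx x) ≤ b ∧ b ≤ f (idx x + 1) := fun x b hb => by
    dsimp only [p] at hb
    split_ifs at hb
    · exact hb.2
    · rw [mem_singleton_iff.1 hb]
      exact ⟨le_rfl, hf (Nat.le_succ _)⟩
  refine ⟨p, fun x _ => ⟨_, mem_p x⟩, fun x _ b hb => ?_, fun x _ y hy hxy b hb b' hb' => ?_,
    fun t ht => ?_⟩
  · dsimp only [p] at hb
    split_ifs at hb
    exacts [hb.1, hb ▸ hfT _]
  · rcases (idx_le (hxy.le.trans (le_idx y hy))).lt_or_eq with hlt | heq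
    · calc b ≤ f (idx x + 1) := (p_bounds x b hb).2
        _ ≤ f (idx y) := hf hlt
        _ ≤ b' := (p_bounds y b' hb').1
    · have hx : x ≠ g (idx x) := (hxy.trans_le (heq ▸ le_idx y hy)).ne
      obtain rfl : b = f (idx x) := by simpa [p, hx] using hb
      exact heq ▸ (p_bounds y b' hb').1
  · obtain ⟨n, hn⟩ := hf_cof t ht
    obtain ⟨m, hmt, htm⟩ := hf.exists_le_le_succ (hf₀ t ht) hn
    refine ⟨g m, hgD m, ?_⟩
    simp only [p, idx_g]
    exact ⟨ht, hmt, htm⟩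

theorem exists_isOrderedCover_of_isLeast [LinearOrder α] [LinearOrder γ]
    (hα : ¬ ∃ f : Ω₁ → α, StrictMono f) (hγ : ¬ ∃ f : Ω₁ → γ, StrictMono f) {D : Set α}
    {T : Set γ} {x₀ : α} {t₀ : γ} (hD : IsLeast D x₀) (hT : IsLeast T t₀) :
    ∃ p, IsOrderedCover D p T := by
  by_cases hD_max : ∃ x₁ ∈ D, ∀ x ∈ D, x ≤ x₁
  · obtain ⟨x₁, hx₁, hx₁_max⟩ := hD_max
    exact exists_isOrderedCover_of_isGreatest_of_isLeast ⟨hx₁, hx₁_max⟩ hT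
  by_cases hT_max : ∃ t₁ ∈ T, ∀ t ∈ T, t ≤ t₁
  · obtain ⟨t₁, ht₁, ht₁_max⟩ := hT_max
    exact exists_isOrderedCover_of_isLeast_of_isGreatest hD ⟨ht₁, ht₁_max⟩
  obtain ⟨g, -, hgD, hg, hg_cof⟩ := exists_strictMono_nat_cofinal hα hD.1 (by simpa using hD_max)
  obtain ⟨f, hf0, hfT, hf, hf_cof⟩ := exists_strictMono_nat_cofinal hγ hT.1 (by simpa using hT_max)
  exact exists_isOrderedCover_of_seq hg hgD hg_cof hf.monotone hfT (hf0 ▸ hT.2) hf_cof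

theorem exists_isOrderedCover_of_isGreatest [LinearOrder α] [LinearOrder γ]
    (hα : ¬ ∃ f : Ω₁ → α, StrictAnti f) (hγ : ¬ ∃ f : Ω₁ → γ, StrictAnti f) {D : Set α}
    {T : Set γ} {x₀ : α} {t₀ : γ} (hD : IsGreatest D x₀) (hT : IsGreatest T t₀) :
    ∃ p, IsOrderedCover D p T := by
  have hα' : ¬ ∃ f : Ω₁ → αᵒᵈ, StrictMono f := fun ⟨f, hf⟩ => hα ⟨_, hf.dual_right⟩
  have hγ' : ¬ ∃ f : Ω₁ → γᵒᵈ, StrictMono f := fun ⟨f, hf⟩ => hγ ⟨_, hf.dual_right⟩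
  obtain ⟨_, hp⟩ := exists_isOrderedCover_of_isLeast hα' hγ' hD.dual hT.dual
  exact ⟨_, hp.of_dual⟩

theorem exists_isOrderedCover [LinearOrder α] [LinearOrder γ] (hα : IsShort α)
    (hγ : IsShort γ) {D : Set α} {T : Set γ} (hD : D.Nonempty) (hT : T.Nonempty) :
    ∃ p, IsOrderedCover D p T := by
  obtain ⟨x₀, hx₀⟩ := hD
  obtain ⟨t₀, ht₀⟩ := hT
  obtain ⟨p, hp⟩ := exists_isOrderedCover_of_isGreatest hα.2 hγ.2
    (D := D ∩ Iic x₀) (T := T ∩ Iic t₀) ⟨⟨hx₀, le_rfl⟩, fun _ h => h.2⟩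
    ⟨⟨ht₀, le_rfl⟩, fun _ h => h.2⟩
  obtain ⟨q, hq⟩ := exists_isOrderedCover_of_isLeast hα.1 hγ.1
    (D := D ∩ Ici x₀) (T := T ∩ Ici t₀) ⟨⟨hx₀, le_rfl⟩, fun _ h => h.2⟩
    ⟨⟨ht₀, le_rfl⟩, fun _ h => h.2⟩
  exact ⟨_, hp.union_Iic_Ici hq⟩

theorem exists_monotone_surjective_lex [Preorder α] [PartialOrder β] [LinearOrder γ]
    (hγ : StronglySurjective γ) {g : α → β} (hg : Monotone g) {S : Set (β ×ₗ γ)}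
    (hS : ∀ s ∈ S, (ofLex s).1 ∈ range g)
    (hfib : ∀ c ∈ range g, ∃ p : α → Set γ,
      IsOrderedCover (g ⁻¹' {c}) p {b | toLex (c, b) ∈ S}) :
    ∃ f : α ×ₗ γ → S, Monotone f ∧ Surjective f := by
  choose! p hp using hfib
  have hpa : ∀ a, IsOrderedCover (g ⁻¹' {g a}) (p (g a)) {b | toLex (g a, b) ∈ S} :=
    fun a => hp _ ⟨a, rfl⟩
  choose h hh_mono hh_surj using fun a => hγ (p (g a) a) ((hpa a).nonempty a rfl)
  let f : α × γ → S := fun x =>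
    ⟨toLex (g x.1, h x.1 x.2), (hpa x.1).subset x.1 rfl (h x.1 x.2).2⟩
  refine ⟨f ∘ ofLex, ?_, ?_⟩
  · intro x y hxy
    obtain ⟨⟨a, b⟩, rfl⟩ := toLex.surjective x
    obtain ⟨⟨a', b'⟩, rfl⟩ := toLex.surjective y
    change toLex (g a, (h a b : γ)) ≤ toLex (g a', (h a' b' : γ))
    rcases Prod.Lex.toLex_le_toLex.1 hxy with hlt | ⟨rfl : a = a', hle⟩
    · rcases (hg hlt.le).lt_or_eq with hglt | hgeq
      · exact Prod.Lex.toLex_le_toLex.2 (.inl hglt)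
      · refine Prod.Lex.toLex_le_toLex.2 (.inr ⟨hgeq, ?_⟩)
        have hb' := (congrArg (p · a') hgeq).symm.subset (h a' b').2
        exact (hpa a).le a rfl a' hgeq.symm hlt _ (h a b).2 _ hb'
    · exact Prod.Lex.toLex_le_toLex.2 (.inr ⟨rfl, hh_mono a hle⟩)
  · rintro ⟨s, hs⟩
    obtain ⟨a, ha⟩ := hS s hs
    obtain ⟨x, hx, hbx⟩ := (hp _ ⟨a, ha⟩).covers (ofLex s).2 hs
    have hx' : g x = (ofLex s).1 := hx
    obtain ⟨b, hb⟩ := hh_surj x ⟨(ofLex s).2, hx' ▸ hbx⟩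
    refine ⟨toLex (x, b), Subtype.ext ?_⟩
    simp [f, hb, hx']

end Construction

/-- The lexicographic product of two short strongly surjective linear orders is
strongly surjective. -/
theorem stronglySurjective_lex_prod {A B : Type*} [LinearOrder A] [LinearOrder B]
    (hA : IsShort A) (hB : IsShort B)
    (hAs : StronglySurjective A) (hBs : StronglySurjective B) :
    StronglySurjective (A ×ₗ B) := by
  rintro S ⟨s₀, hs₀⟩
  obtain ⟨g, hg, hg_surj⟩ :=
    hAs {a | ∃ b, toLex (a, b) ∈ S} ⟨(ofLex s₀).1, (ofLex s₀).2, hs₀⟩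
  have hS : ∀ s ∈ S, (ofLex s).1 ∈ range fun a => (g a : A) := fun s hs =>
    let ⟨a, ha⟩ := hg_surj ⟨(ofLex s).1, (ofLex s).2, hs⟩
    ⟨a, congrArg Subtype.val ha⟩
  exact exists_monotone_surjective_lex (g := fun a => (g a : A)) hBs (fun _ _ h => hg h) hS
    (by rintro _ ⟨a, rfl⟩; exact exists_isOrderedCover hA hB ⟨a, rfl⟩ (g a).2)
end

section
/- Every strongly surjective linear order is short: if L is strongly surjective then there is no strictly increasing ω₁-indexed sequence and no strictly decreasing ω₁-indexed sequence in L. -/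
open Cardinal Order Set

section

universe u

variable {α β : Type u} {f : α → β}

theorem Monotone.cof_le_of_surjective [Preorder α] [Preorder β] (hf : Monotone f)
    (hsurj : Function.Surjective f) : cof β ≤ cof α := by
  obtain ⟨s, hs, hcard⟩ := exists_cof_eq α
  calc cof β ≤ #(f '' s) := cof_le (hs.image hf (by simp [hsurj.range_eq]))
    _ ≤ #s := mk_image_le
    _ = cof α := hcard

theorem Monotone.cof_le_of_surjective_of_noMaxOrder [LinearOrder α] [Preorder β] [NoMaxOrder β]
    (hf : Monotone f) (hsurj : Function.Surjective f) : cof α ≤ cof β := by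
  obtain ⟨s, hs, hcard⟩ := exists_cof_eq β
  have hcofinal : IsCofinal (Function.surjInv hsurj '' s) := by
    intro a
    obtain ⟨b, hab⟩ := exists_gt (f a)
    obtain ⟨c, hc, hbc⟩ := hs b
    refine ⟨_, mem_image_of_mem _ hc, (hf.reflect_lt ?_).le⟩
    rw [Function.surjInv_eq hsurj]
    exact hab.trans_le hbc
  calc cof α ≤ #(Function.surjInv hsurj '' s) := cof_le hcofinal
    _ ≤ #s := mk_image_le
    _ = cof β := hcard

end

theorem cof_Iio_omega_one : cof {o : Ordinal.{0} // o < (aleph 1).ord} = ℵ₁ := by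
  have h := Ordinal.cof_Iio (aleph 1).ord
  rw [ord_aleph, Ordinal.lift_omega, Ordinal.lift_one, cof_omega_one] at h
  rw [ord_aleph]
  exact h

namespace StronglySurjective

universe v

variable {L : Type v} [LinearOrder L]

theorem orderDual (hL : StronglySurjective L) : StronglySurjective Lᵒᵈ := by
  intro S ⟨s, hs⟩
  obtain ⟨f, hf, hsurj⟩ := hL (OrderDual.toDual ⁻¹' S) ⟨OrderDual.ofDual s, hs⟩
  refine ⟨fun a => ⟨OrderDual.toDual (f (OrderDual.ofDual a)), (f (OrderDual.ofDual a)).2⟩,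
    fun a b hab => hf hab, fun ⟨t, ht⟩ => ?_⟩
  obtain ⟨z, hz⟩ := hsurj ⟨OrderDual.ofDual t, ht⟩
  exact ⟨OrderDual.toDual z, by simp [hz]⟩

theorem cof_le (hL : StronglySurjective L) {S : Set L} (hS : S.Nonempty) : cof S ≤ cof L :=
  let ⟨_, hf, hsurj⟩ := hL S hS
  hf.cof_le_of_surjective hsurj

theorem cof_le_of_noMaxOrder (hL : StronglySurjective L) {S : Set L} (hS : S.Nonempty)
    [NoMaxOrder S] : cof L ≤ cof S :=
  let ⟨_, hf, hsurj⟩ := hL S hS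
  hf.cof_le_of_surjective_of_noMaxOrder hsurj

theorem cof_le_aleph0 (hL : StronglySurjective L) {s : ℕ → L} (hs : StrictMono s) :
    cof L ≤ ℵ₀ := by
  have : NoMaxOrder (range s) :=
    ⟨fun ⟨_, k, hk⟩ => ⟨⟨s (k + 1), k + 1, rfl⟩, hk ▸ hs k.lt_succ_self⟩⟩
  calc cof L ≤ cof (range s) := hL.cof_le_of_noMaxOrder (range_nonempty s)
    _ ≤ #(range s) := cof_le_cardinalMk _
    _ ≤ ℵ₀ := (countable_range s).le_aleph0

theorem not_strictMono_omega_one (hL : StronglySurjective L)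
    (f : {o : Ordinal.{0} // o < (aleph 1).ord} → L) : ¬ StrictMono f := by
  intro hf
  have hnat (k : ℕ) : (k : Ordinal.{0}) < (aleph 1).ord := by
    rw [ord_aleph]
    exact (Ordinal.natCast_lt_omega0 k).trans Ordinal.omega0_lt_omega_one
  have hcof_L : cof L ≤ ℵ₀ :=
    hL.cof_le_aleph0 (s := fun k => f ⟨k, hnat k⟩) fun _ _ h =>
      hf (Subtype.mk_lt_mk.mpr (Nat.cast_lt.mpr h))
  have hcof_range : lift.{v} ℵ₁ = lift.{1} (cof (range f)) := by
    rw [← (hf.orderIso f).lift_cof_congr, cof_Iio_omega_one]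
  have hle : lift.{1} (cof (range f)) ≤ ℵ₀ :=
    lift_le_aleph0.mpr ((hL.cof_le ⟨_, mem_range_self ⟨0, hnat 0⟩⟩).trans hcof_L)
  rw [← hcof_range] at hle
  simp at hle

end StronglySurjective

/-- Every strongly surjective linear order is short: it admits no strictly increasing
and no strictly decreasing `ω₁`-indexed sequence. -/
theorem stronglySurjective_short {L : Type*} [LinearOrder L]
    (hL : StronglySurjective L) :
    (¬ ∃ f : {o : Ordinal.{0} // o < (Cardinal.aleph 1).ord} → L, StrictMono f) ∧
    (¬ ∃ f : {o : Ordinal.{0} // o < (Cardinal.aleph 1).ord} → L, StrictAnti f) :=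
  ⟨fun ⟨f, hf⟩ => hL.not_strictMono_omega_one f hf,
    fun ⟨f, hf⟩ => hL.orderDual.not_strictMono_omega_one (OrderDual.toDual ∘ f) hf.dual_right⟩
end

section
/- Let A be a linear order with a left endpoint and with cofinality ω, witnessed by an increasing cofinal sequence ⟨aₙ : n < ω⟩ starting at the minimum a₀. Then there is a monotone surjection from the ℤ-indexed sum ⋯ + 1 + A + 1 + A + 1 + ⋯ onto A. -/
/-!
Send the copy of `1 + A` with index `i ≥ 0` onto the interval `[a i, a (i + 1)]`: the point of `1`
goes to `a i` and `y ∈ A` goes to `y` clamped into the interval; the copies with negative index all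
collapse to `a 0`. Consecutive intervals abut, so the map is monotone, and since `a 0` is the
minimum and the `a i` are cofinal, the intervals cover `A`.
-/

open Order

theorem Prod.Lex.monotone_of_monotone_of_lt {ι β γ : Type*}
    [Preorder ι] [Preorder β] [Preorder γ]
    {f : ι ×ₗ β → γ} (hblock : ∀ i, Monotone fun x => f (toLex (i, x)))
    (hlt : ∀ ⦃i j⦄, i < j → ∀ x y, f (toLex (i, x)) ≤ f (toLex (j, y))) : Monotone f := by
  rintro ⟨i, x⟩ ⟨j, y⟩ h
  rcases Prod.Lex.toLex_le_toLex.mp h with hij | ⟨rfl, hxy⟩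
  · exact hlt hij x y
  · exact hblock i hxy

section Clamp

variable {ι α : Type*} [Preorder ι] [SuccOrder ι] [LinearOrder α]

def clampBlock (b : ι → α) (i : ι) : WithBot α → α :=
  WithBot.recBotCoe (b i) fun y => max (b i) (min (b (succ i)) y)

theorem monotone_clampBlock (b : ι → α) (i : ι) : Monotone (clampBlock b i) := by
  intro x y hxy
  cases y with
  | bot => rw [le_bot_iff.mp hxy]
  | coe y =>
    cases x with
    | bot => exact le_max_left _ _
    | coe x => exact max_le_max le_rfl (min_le_min le_rfl (WithBot.coe_le_coe.mp hxy))

theorem le_clampBlock (b : ι → α) (i : ι) (x : WithBot α) : b i ≤ clampBlock b i x := by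
  cases x with
  | bot => exact le_rfl
  | coe x => exact le_max_left _ _

theorem clampBlock_le {b : ι → α} (hb : Monotone b) (i : ι) (x : WithBot α) :
    clampBlock b i x ≤ b (succ i) := by
  cases x with
  | bot => exact hb (le_succ i)
  | coe x => exact max_le (hb (le_succ i)) (min_le_left _ _)

theorem clampBlock_coe_of_mem {b : ι → α} {i : ι} {y : α}
    (hy : y ∈ Set.Icc (b i) (b (succ i))) :
    clampBlock b i y = y := by
  simp [clampBlock, min_eq_right hy.2, max_eq_right hy.1]

def clampSum (b : ι → α) (p : ι ×ₗ WithBot α) : α :=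
  clampBlock b (ofLex p).1 (ofLex p).2

theorem monotone_clampSum {b : ι → α} (hb : Monotone b) : Monotone (clampSum b) :=
  Prod.Lex.monotone_of_monotone_of_lt (f := clampSum b) (monotone_clampBlock b)
    fun i j hij x y =>
    calc clampBlock b i x ≤ b (succ i) := clampBlock_le hb i x
      _ ≤ b j := hb (succ_le_of_lt hij)
      _ ≤ clampBlock b j y := le_clampBlock b j y

theorem surjective_clampSum {b : ι → α} (hcover : ∀ y, ∃ i, y ∈ Set.Icc (b i) (b (succ i))) :
    Function.Surjective (clampSum b) := fun y =>
  let ⟨i, hi⟩ := hcover y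
  ⟨toLex (i, y), clampBlock_coe_of_mem hi⟩

end Clamp

theorem Monotone.exists_mem_Icc_succ {A : Type*} [LinearOrder A] {a : ℕ → A} (ha : Monotone a)
    {y : A} (h0 : a 0 ≤ y) (hy : ∃ n, y ≤ a n) : ∃ m, y ∈ Set.Icc (a m) (a (m + 1)) := by
  classical
  cases hn : Nat.find hy with
  | zero =>
    have hy0 : y ≤ a 0 := hn ▸ Nat.find_spec hy
    exact ⟨0, h0, hy0.trans (ha (Nat.zero_le 1))⟩
  | succ m =>
    exact ⟨m, (not_le.mp (Nat.find_min hy (hn ▸ Nat.lt_succ_self m))).le, hn ▸ Nat.find_spec hy⟩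

/-- If `A` has a left endpoint `a 0` and an increasing cofinal sequence `⟨a n : n < ω⟩`,
then the `ℤ`-indexed sum `⋯ + 1 + A + 1 + A + 1 + ⋯` (formalized as the lexicographic
product `ℤ ×ₗ (WithBot A)`, i.e. `ℤ` copies of `1 + A`) surjects monotonically onto `A`. -/
theorem zsum_epi_onto {A : Type*} [LinearOrder A] (a : ℕ → A)
    (hmin : ∀ x, a 0 ≤ x) (hmono : StrictMono a) (hcof : ∀ x, ∃ n, x ≤ a n) :
    ∃ f : ℤ ×ₗ (WithBot A) → A, Monotone f ∧ Function.Surjective f := by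
  set b : ℤ → A := fun i => a i.toNat
  have hb : Monotone b := hmono.monotone.comp fun _ _ h => Int.toNat_le_toNat h
  refine ⟨clampSum b, monotone_clampSum hb, surjective_clampSum fun y => ?_⟩
  obtain ⟨m, hm⟩ := hmono.monotone.exists_mem_Icc_succ (hmin y) (hcof y)
  exact ⟨m, by simpa [b] using hm⟩
end

section
/- Let I be a dense linear order without endpoints that is open strongly surjective, and let (A_i)_{i∈I} be a family of nonempty strongly surjective linear orders such that for every i ∈ I the set {j ∈ I : A_j ≅ A_i} is dense in I. Then the sum Σ_{i∈I} A_i is strongly surjective. -/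
/-- A linear order is open strongly surjective if the surjections onto suborders can be
chosen so that every fiber has neither a minimum nor a maximum. -/
def OpenStronglySurjective (L : Type*) [LinearOrder L] : Prop :=
  ∀ S : Set L, S.Nonempty → ∃ f : L → S, Monotone f ∧ Function.Surjective f ∧
    ∀ s : S, (∀ x, f x = s → ∃ y, f y = s ∧ y < x) ∧ (∀ x, f x = s → ∃ y, f y = s ∧ x < y)


open Function Set

section Sequences

variable {α : Type*}

lemma exists_nat_seq_of_rel (r : α → α → Prop) (g : α → α → α)
    (hg : ∀ x y, r x (g x y) ∧ r y (g x y)) (a : α) (u : ℕ → α) :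
    ∃ P : ℕ → α, P 0 = a ∧ ∀ n, r (P n) (P (n + 1)) ∧ r (u n) (P (n + 1)) :=
  ⟨fun n => Nat.rec a (fun n p => g p (u n)) n, rfl, fun _ => hg _ _⟩

lemma exists_int_seq_of_rel (r : α → α → Prop) (g g' : α → α → α)
    (hg : ∀ x y, r x (g x y) ∧ r y (g x y)) (hg' : ∀ x y, r (g' x y) x ∧ r (g' x y) y)
    (a : α) (u v : ℕ → α) :
    ∃ p : ℤ → α, (∀ z, r (p z) (p (z + 1))) ∧ (∀ n, ∃ z, r (u n) (p z)) ∧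
      ∀ n, ∃ z, r (p z) (v n) := by
  obtain ⟨P, hP0, hP⟩ := exists_nat_seq_of_rel r g hg a u
  obtain ⟨Q, hQ0, hQ⟩ := exists_nat_seq_of_rel (flip r) g' hg' a v
  refine ⟨fun z => Int.casesOn z P fun n => Q (n + 1), ?_, fun n => ⟨(n + 1 : ℕ), (hP n).2⟩,
    fun n => ⟨Int.negSucc n, (hQ n).2⟩⟩
  rintro (n | _ | n)
  · exact (hP n).1
  · change r (Q 1) (P 0)
    rw [hP0, ← hQ0]
    exact (hQ 0).1
  · exact (hQ (n + 1)).1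

variable [LinearOrder α]

lemma exists_monotone_int_cofinal_coinitial (hcof : ∃ u : ℕ → α, ∀ x, ∃ n, x ≤ u n)
    (hcoi : ∃ v : ℕ → α, ∀ x, ∃ n, v n ≤ x) :
    ∃ c : ℤ → α, Monotone c ∧ (∀ x, ∃ z, x ≤ c z) ∧ ∀ x, ∃ z, c z ≤ x := by
  obtain ⟨u, hu⟩ := hcof
  obtain ⟨v, hv⟩ := hcoi
  obtain ⟨c, hc, hcu, hcv⟩ := exists_int_seq_of_rel (· ≤ ·) max min
    (fun x y => ⟨le_max_left x y, le_max_right x y⟩)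
    (fun x y => ⟨min_le_left x y, min_le_right x y⟩) (u 0) u v
  refine ⟨c, monotone_int_of_le_succ hc, fun x => ?_, fun x => ?_⟩
  · obtain ⟨n, hn⟩ := hu x
    obtain ⟨z, hz⟩ := hcu n
    exact ⟨z, hn.trans hz⟩
  · obtain ⟨n, hn⟩ := hv x
    obtain ⟨z, hz⟩ := hcv n
    exact ⟨z, hz.trans hn⟩

lemma exists_strictMono_int_cofinal_coinitial [NoMaxOrder α] [NoMinOrder α]
    (hcof : ∃ u : ℕ → α, ∀ x, ∃ n, x ≤ u n) (hcoi : ∃ v : ℕ → α, ∀ x, ∃ n, v n ≤ x) :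
    ∃ c : ℤ → α, StrictMono c ∧ (∀ x, ∃ z, x < c z) ∧ ∀ x, ∃ z, c z < x := by
  obtain ⟨u, hu⟩ := hcof
  obtain ⟨v, hv⟩ := hcoi
  choose g hg using fun x y : α => exists_gt (max x y)
  choose g' hg' using fun x y : α => exists_lt (min x y)
  obtain ⟨c, hc, hcu, hcv⟩ := exists_int_seq_of_rel (· < ·) g g' (fun x y => max_lt_iff.1 (hg x y))
    (fun x y => lt_min_iff.1 (hg' x y)) (u 0) u v
  refine ⟨c, strictMono_int_of_lt_succ hc, fun x => ?_, fun x => ?_⟩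
  · obtain ⟨n, hn⟩ := hu x
    obtain ⟨z, hz⟩ := hcu n
    exact ⟨z, hn.trans_lt hz⟩
  · obtain ⟨n, hn⟩ := hv x
    obtain ⟨z, hz⟩ := hcv n
    exact ⟨z, hz.trans_le hn⟩

lemma Monotone.exists_lt_le_add_one {f : ℤ → α} (hf : Monotone f) {x : α} {a b : ℤ}
    (ha : f a < x) (hb : x ≤ f b) : ∃ z, f z < x ∧ x ≤ f (z + 1) := by
  obtain ⟨K, hK, hKmin⟩ := Int.exists_least_of_bdd (P := fun z => x ≤ f z)
    ⟨a, fun z hz => le_of_not_gt fun hza => (ha.trans_le hz).not_ge (hf hza.le)⟩ ⟨b, hb⟩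
  refine ⟨K - 1, lt_of_not_ge fun h => ?_, by simpa using hK⟩
  have := hKmin _ h
  omega

end Sequences

namespace StronglySurjective

variable {L : Type*} [LinearOrder L]

lemma dual (h : StronglySurjective L) : StronglySurjective Lᵒᵈ := by
  intro S hS
  obtain ⟨f, hf, hfs⟩ := h (OrderDual.ofDual ⁻¹' S) hS
  refine ⟨fun x => ⟨OrderDual.toDual (f (OrderDual.ofDual x)), (f _).2⟩, fun x y hxy => hf hxy,
    fun s => ?_⟩
  obtain ⟨x, hx⟩ := hfs ⟨OrderDual.ofDual s, s.2⟩
  exact ⟨OrderDual.toDual x, Subtype.ext (congrArg Subtype.val hx)⟩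

lemma exists_nat_cofinal [Nonempty L] (h : StronglySurjective L) :
    ∃ u : ℕ → L, ∀ x, ∃ n, x ≤ u n := by
  by_cases hmax : ∃ m : L, ∀ x, x ≤ m
  · obtain ⟨m, hm⟩ := hmax
    exact ⟨fun _ => m, fun x => ⟨0, hm x⟩⟩
  have : NoMaxOrder L := ⟨fun a => by push Not at hmax; exact hmax a⟩
  obtain ⟨y, hy⟩ := Nat.exists_strictMono L
  obtain ⟨f, hf, hfs⟩ := h (range y) ⟨y 0, mem_range_self 0⟩
  choose u hu using fun n => hfs ⟨y (n + 1), mem_range_self _⟩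
  -- if `f x = y m`, then `x` lies below every preimage of `y (m + 1)`
  refine ⟨u, fun x => ?_⟩
  obtain ⟨m, hm⟩ := (f x).2
  refine ⟨m, le_of_not_gt fun hx => ?_⟩
  have h' := hf hx.le
  rw [hu, ← Subtype.coe_le_coe, ← hm] at h'
  exact (hy (lt_add_one m)).not_ge h'

lemma exists_nat_coinitial [Nonempty L] (h : StronglySurjective L) :
    ∃ v : ℕ → L, ∀ x, ∃ n, v n ≤ x :=
  h.dual.exists_nat_cofinal

lemma exists_nat_cofinal_coinitial_subtype (h : StronglySurjective L) (X : Set L)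
    (hX : X.Nonempty) :
    (∃ u : ℕ → X, ∀ x, ∃ n, x ≤ u n) ∧ ∃ v : ℕ → X, ∀ x, ∃ n, v n ≤ x := by
  have : Nonempty L := hX.to_subtype.map Subtype.val
  obtain ⟨f, hf, hfs⟩ := h X hX
  obtain ⟨u, hu⟩ := h.exists_nat_cofinal
  obtain ⟨v, hv⟩ := h.exists_nat_coinitial
  refine ⟨⟨f ∘ u, fun x => ?_⟩, ⟨f ∘ v, fun x => ?_⟩⟩ <;> obtain ⟨w, rfl⟩ := hfs x
  · obtain ⟨n, hn⟩ := hu w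
    exact ⟨n, hf hn⟩
  · obtain ⟨n, hn⟩ := hv w
    exact ⟨n, hf hn⟩

end StronglySurjective

lemma OpenStronglySurjective.stronglySurjective {L : Type*} [LinearOrder L]
    (h : OpenStronglySurjective L) : StronglySurjective L := fun S hS =>
  let ⟨f, hf, hfs, _⟩ := h S hS
  ⟨f, hf, hfs⟩

lemma Set.OrdConnected.exists_strictMono_int_Ioc_cover {I : Type*} [LinearOrder I] {F : Set I}
    (hF : F.OrdConnected) [NoMaxOrder F] [NoMinOrder F] (hcof : ∃ u : ℕ → F, ∀ x, ∃ n, x ≤ u n)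
    (hcoi : ∃ v : ℕ → F, ∀ x, ∃ n, v n ≤ x) {P : I → Prop}
    (hP : ∀ x y, x < y → ∃ j, x < j ∧ j < y ∧ P j) :
    ∃ j : ℤ → I, StrictMono j ∧ (∀ z, j z ∈ F ∧ P (j z)) ∧
      ∀ i ∈ F, ∃ z, j z < i ∧ i ≤ j (z + 1) := by
  obtain ⟨p, hp, hpcof, hpcoi⟩ := exists_strictMono_int_cofinal_coinitial hcof hcoi
  choose j hj using fun z => hP _ _ (hp (lt_add_one z))
  have hj_mono : StrictMono j := strictMono_int_of_lt_succ fun z => (hj z).2.1.trans (hj (z + 1)).1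
  refine ⟨j, hj_mono, fun z => ⟨hF.out (p z).2 (p (z + 1)).2 ⟨(hj z).1.le, (hj z).2.1.le⟩,
    (hj z).2.2⟩, fun i hi => ?_⟩
  obtain ⟨a, ha⟩ := hpcoi ⟨i, hi⟩
  obtain ⟨b, hb⟩ := hpcof ⟨i, hi⟩
  refine hj_mono.monotone.exists_lt_le_add_one (a := a - 1) (b := b) ?_
    ((Subtype.coe_lt_coe.2 hb).le.trans (hj b).1.le)
  have h := (hj (a - 1)).2.1
  rw [sub_add_cancel] at h
  exact h.trans (Subtype.coe_lt_coe.2 ha)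

section SigmaLex

variable {I : Type*} [LinearOrder I] {A : I → Type*} [∀ i, LinearOrder (A i)]

lemma exists_monotoneOn_surjOn_of_int_blocks {X : Type*} [LinearOrder X] {F : Set I}
    {j : ℤ → I} (hj : StrictMono j) (hjF : ∀ z, j z ∈ F)
    (hF : ∀ i ∈ F, ∃ z, j z < i ∧ i ≤ j (z + 1)) (ψ : ∀ i, A i → X)
    (hψ : ∀ i ∈ range j, Monotone (ψ i) ∧ Surjective (ψ i)) {c : ℤ → X} (hc : Monotone c)
    (hcof : ∀ x, ∃ z, x ≤ c z) (hcoi : ∀ x, ∃ z, c z ≤ x) :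
    ∃ Φ : (Σₗ i, A i) → X, MonotoneOn Φ {p | p.1 ∈ F} ∧ SurjOn Φ {p | p.1 ∈ F} univ := by
  choose! N hN using hF
  have hN_j : ∀ z, N (j (z + 1)) = z := fun z => by
    obtain ⟨h₁, h₂⟩ := hN _ (hjF (z + 1))
    rw [hj.lt_iff_lt] at h₁
    rw [hj.le_iff_le] at h₂
    omega
  have hN_mono : ∀ i ∈ F, ∀ i' ∈ F, i ≤ i' → N i ≤ N i' := fun i hi i' hi' hii' => by
    have := (hN i hi).1.trans_le (hii'.trans (hN i' hi').2)
    rw [hj.lt_iff_lt] at this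
    omega
  let Φ : (Σₗ i, A i) → X := fun p =>
    if p.1 = j (N p.1 + 1) then max (c (N p.1)) (min (ψ p.1 p.2) (c (N p.1 + 1))) else c (N p.1)
  have hΦ_bounds : ∀ p, c (N p.1) ≤ Φ p ∧ Φ p ≤ c (N p.1 + 1) := fun p => by
    simp only [Φ]
    split_ifs
    · exact ⟨le_max_left _ _, max_le (hc (by omega)) (min_le_right _ _)⟩
    · exact ⟨le_rfl, hc (by omega)⟩
  refine ⟨Φ, ?_, fun x _ => ?_⟩
  · rintro ⟨i, a⟩ hi ⟨i', a'⟩ hi' haa'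
    rcases haa' with ⟨_, _, hii'⟩ | ⟨_, _, haa'⟩
    · rcases (hN_mono i hi i' hi' hii'.le).lt_or_eq with hN' | hN'
      · calc Φ ⟨i, a⟩ ≤ c (N i + 1) := (hΦ_bounds ⟨i, a⟩).2
          _ ≤ c (N i') := hc (by omega)
          _ ≤ Φ ⟨i', a'⟩ := (hΦ_bounds ⟨i', a'⟩).1
      · have hne : i ≠ j (N i + 1) := (hii'.trans_le (hN' ▸ (hN i' hi').2)).ne
        calc Φ ⟨i, a⟩ = c (N i) := if_neg hne
          _ ≤ Φ ⟨i', a'⟩ := hN' ▸ (hΦ_bounds ⟨i', a'⟩).1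
    · simp only [Φ]
      split_ifs with h
      · exact max_le_max le_rfl (min_le_min_right _ ((hψ i ⟨_, h.symm⟩).1 haa'))
      · exact le_rfl
  · obtain ⟨z, hz₁, hz₂⟩ : ∃ z, c z ≤ x ∧ x ≤ c (z + 1) := by
      obtain ⟨a, ha⟩ := hcoi x
      obtain ⟨b, hb⟩ := hcof x
      rcases ha.lt_or_eq with ha | rfl
      · obtain ⟨z, hz⟩ := hc.exists_lt_le_add_one ha hb
        exact ⟨z, hz.1.le, hz.2⟩
      · exact ⟨a, le_rfl, hc (by omega)⟩
    obtain ⟨a, ha⟩ := (hψ _ (mem_range_self (z + 1))).2 x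
    refine ⟨⟨j (z + 1), a⟩, hjF _, ?_⟩
    simp [Φ, hN_j, ha, hz₁, hz₂]

lemma exists_monotoneOn_surjOn_of_ordConnected {B : Type*} [LinearOrder B]
    (hB : StronglySurjective B) {X : Set B} (hX : X.Nonempty) {F : Set I} (hF : F.OrdConnected)
    [NoMaxOrder F] [NoMinOrder F] (hcof : ∃ u : ℕ → F, ∀ x, ∃ n, x ≤ u n)
    (hcoi : ∃ v : ℕ → F, ∀ x, ∃ n, v n ≤ x)
    (hdense : ∀ x y : I, x < y → ∃ j, x < j ∧ j < y ∧ Nonempty (A j ≃o B)) :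
    ∃ Φ : (Σₗ i, A i) → X, MonotoneOn Φ {p | p.1 ∈ F} ∧ SurjOn Φ {p | p.1 ∈ F} univ := by
  classical
  obtain ⟨j, hj, hjF, hF'⟩ := hF.exists_strictMono_int_Ioc_cover hcof hcoi hdense
  obtain ⟨f, hf, hfs⟩ := hB X hX
  obtain ⟨hXcof, hXcoi⟩ := hB.exists_nat_cofinal_coinitial_subtype X hX
  obtain ⟨c, hc, hccof, hccoi⟩ := exists_monotone_int_cofinal_coinitial hXcof hXcoi
  let ψ : ∀ i, A i → X := fun i =>
    if hi : Nonempty (A i ≃o B) then f ∘ hi.some else fun _ => ⟨hX.some, hX.some_mem⟩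
  refine exists_monotoneOn_surjOn_of_int_blocks hj (fun z => (hjF z).1) hF' ψ ?_ hc hccof hccoi
  rintro _ ⟨z, rfl⟩
  simp only [ψ, dif_pos (hjF z).2]
  exact ⟨hf.comp (hjF z).2.some.monotone, hfs.comp (hjF z).2.some.surjective⟩

lemma exists_monotone_surjective_sigmaLex_of_fibers {κ : Type*} [LinearOrder κ]
    {B : κ → Type*} [∀ k, LinearOrder (B k)] {g : I → κ} (hg : Monotone g)
    (Φ : ∀ k, (Σₗ i, A i) → B k) (hΦ : ∀ k, MonotoneOn (Φ k) {p | g p.1 = k})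
    (hΦs : ∀ k, SurjOn (Φ k) {p | g p.1 = k} univ) :
    ∃ Ψ : (Σₗ i, A i) → Σₗ k, B k, Monotone Ψ ∧ Surjective Ψ := by
  refine ⟨fun p => toLex ⟨g p.1, Φ (g p.1) p⟩, fun p q hpq => ?_, fun b => ?_⟩
  · have hpq₁ : p.1 ≤ q.1 := by
      rcases Sigma.Lex.le_def.1 hpq with h | ⟨h, _⟩
      exacts [h.le, h.le]
    rcases (hg hpq₁).lt_or_eq with h | h
    · exact Sigma.Lex.left _ _ h
    · have hle := hΦ _ h rfl hpq
      dsimp only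
      rw [h]
      exact Sigma.Lex.right _ _ hle
  · obtain ⟨k, b⟩ := b
    obtain ⟨p, rfl, hp⟩ := hΦs k (mem_univ b)
    exact ⟨p, congrArg (fun b : B (g p.1) => toLex (⟨g p.1, b⟩ : Sigma B)) hp⟩

lemma exists_monotone_surjective_of_sections (S : Set (Σₗ i, A i)) :
    ∃ f : (Σₗ t : {i | ∃ a : A i, toLex ⟨i, a⟩ ∈ S}, {a : A t | toLex ⟨t.1, a⟩ ∈ S}) → S,
      Monotone f ∧ Surjective f := by
  refine ⟨fun p => ⟨toLex ⟨p.1, p.2⟩, p.2.2⟩, fun p q hpq => ?_, fun s => ?_⟩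
  · obtain ⟨t, a⟩ := p
    obtain ⟨t', a'⟩ := q
    rcases hpq with ⟨_, _, h⟩ | ⟨_, _, h⟩
    · exact Sigma.Lex.left _ _ h
    · exact Sigma.Lex.right _ _ h
  · obtain ⟨⟨i, a⟩, hs⟩ := s
    exact ⟨toLex ⟨⟨i, a, hs⟩, ⟨a, hs⟩⟩, rfl⟩

end SigmaLex

theorem mixed_sum_stronglySurjective_general {I : Type*} [LinearOrder I]
    (hI : OpenStronglySurjective I)
    (A : I → Type*) [∀ i, LinearOrder (A i)]
    (hSS : ∀ i, StronglySurjective (A i))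
    (hdense : ∀ i, ∀ x y : I, x < y → ∃ j, x < j ∧ j < y ∧ Nonempty (A j ≃o A i)) :
    StronglySurjective (Σₗ i, A i) := by
  intro S hS
  set T : Set I := {i | ∃ a : A i, toLex ⟨i, a⟩ ∈ S}
  obtain ⟨g, hg, hgs, hgo⟩ := hI T (let ⟨p, hp⟩ := hS; ⟨p.1, p.2, hp⟩)
  have hfiber : ∀ t : T, ∃ Φ : (Σₗ i, A i) → {a : A t | toLex ⟨t.1, a⟩ ∈ S},
      MonotoneOn Φ {p | g p.1 = t} ∧ SurjOn Φ {p | g p.1 = t} univ := fun t => by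
    have : NoMaxOrder (g ⁻¹' {t}) :=
      ⟨fun x => let ⟨y, hy, hxy⟩ := (hgo t).2 x x.2; ⟨⟨y, hy⟩, hxy⟩⟩
    have : NoMinOrder (g ⁻¹' {t}) :=
      ⟨fun x => let ⟨y, hy, hxy⟩ := (hgo t).1 x x.2; ⟨⟨y, hy⟩, hxy⟩⟩
    obtain ⟨hcof, hcoi⟩ := hI.stronglySurjective.exists_nat_cofinal_coinitial_subtype _ (hgs t)
    exact exists_monotoneOn_surjOn_of_ordConnected (hSS t) t.2
      (ordConnected_singleton.preimage_mono hg) hcof hcoi (hdense t)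
  choose Φ hΦ hΦs using hfiber
  obtain ⟨Ψ, hΨ, hΨs⟩ := exists_monotone_surjective_sigmaLex_of_fibers hg Φ hΦ hΦs
  obtain ⟨f, hf, hfs⟩ := exists_monotone_surjective_of_sections S
  exact ⟨f ∘ Ψ, hf.comp hΨ, hfs.comp hΨs⟩

/-- An `I`-mixed sum of nonempty strongly surjective linear orders, over a dense
open strongly surjective order `I` without endpoints, is strongly surjective. -/
theorem mixed_sum_stronglySurjective {I : Type*} [LinearOrder I] [DenselyOrdered I]
    [NoMinOrder I] [NoMaxOrder I] [Nonempty I]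
    (hI : OpenStronglySurjective I)
    (A : I → Type*) [∀ i, LinearOrder (A i)] [∀ i, Nonempty (A i)]
    (hSS : ∀ i, StronglySurjective (A i))
    (hdense : ∀ i, ∀ x y : I, x < y → ∃ j, x < j ∧ j < y ∧ Nonempty (A j ≃o A i)) :
    StronglySurjective (Σₗ i, A i) :=
  mixed_sum_stronglySurjective_general hI A hSS hdense
end

section
/- Let A be an Aronszajn line (here use only: A is an uncountable linear order with no strictly ω₁-increasing or ω₁-decreasing sequence, of cardinality ℵ₁ with underlying set ω₁). Identifying a ∈ A with ã ∈ 2^{ω₁} as the characteristic function of its strict lower set, for every a ∈ A the ordinal δ_A(a) := sup{Δ_A(a,b)+1 : b ∈ A, b ≠ a} is countable, where Δ_A(a,b) is the least coordinate where ã and b̃ differ. -/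
/-!
If `Δ a ·` were unbounded below `ω₁`, it would be unbounded on one side of `a`, say above `a`.
Since countable sets of countable ordinals are bounded, a transfinite recursion picks `b_ξ` above
`a` with `Δ a b_ξ` strictly increasing. For `η < ξ` the coordinate `Δ a b_η` separates `b_η`
from `a` but not `b_ξ` from `a`, which forces `b_ξ <_A b_η`: an `ω₁`-decreasing sequence.
Below `a` the same argument yields an `ω₁`-increasing one.
-/

/-- The set of countable ordinals, i.e. the underlying set `ω₁`. -/
abbrev CtblOrd : Type 1 := {o : Ordinal.{0} // o < (Cardinal.aleph 1).ord}

open Cardinal Ordinal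

namespace CtblOrd

theorem countable_Iio (ξ : CtblOrd) : (Set.Iio ξ).Countable := by
  have hξ : (Set.Iio ξ.1).Countable := by
    rw [← le_aleph0_iff_set_countable, Cardinal.mk_Iio_ordinal, lift_le_aleph0,
      ← lt_aleph_one_iff, ← lt_ord]
    exact ξ.2
  exact (hξ.preimage Subtype.val_injective).mono fun _ h ↦ h

theorem exists_gt_of_countable {s : Set CtblOrd} (hs : s.Countable) :
    ∃ γ : CtblOrd, ∀ x ∈ s, x < γ := by
  have := hs.to_subtype
  have hsup : ⨆ x : s, Order.succ x.1.1 < ω₁ :=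
    iSup_lt_omega_one fun x ↦ (isSuccLimit_omega 1).succ_lt ((ord_aleph 1) ▸ x.1.2)
  refine ⟨⟨_, (ord_aleph 1).symm ▸ hsup⟩, fun x hx ↦ ?_⟩
  exact (Order.lt_succ x.1).trans_le
    (le_ciSup (f := fun x : s ↦ Order.succ x.1.1) Ordinal.bddAbove_of_small ⟨x, hx⟩)

theorem exists_strictMono_comp_of_forall_exists_le {β : Type*} (s : Set β) (D : β → CtblOrd)
    (h : ∀ γ, ∃ b ∈ s, γ ≤ D b) : ∃ F : CtblOrd → β, (∀ ξ, F ξ ∈ s) ∧ StrictMono (D ∘ F) := by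
  choose next hnext_mem hnext_le using h
  have hbound (ξ : CtblOrd) (g : ∀ η < ξ, β) : ∃ γ, ∀ η (hη : η < ξ), D (g η hη) < γ := by
    have := (countable_Iio ξ).to_subtype
    obtain ⟨γ, hγ⟩ :=
      exists_gt_of_countable (Set.countable_range fun η : Set.Iio ξ ↦ D (g η η.2))
    exact ⟨γ, fun η hη ↦ hγ _ ⟨⟨η, hη⟩, rfl⟩⟩
  choose bound hbound using hbound
  let F : CtblOrd → β := wellFounded_lt.fix fun ξ g ↦ next (bound ξ g)
  have hF (ξ : CtblOrd) : F ξ = next (bound ξ fun η _ ↦ F η) := wellFounded_lt.fix_eq _ _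
  refine ⟨F, fun ξ ↦ hF ξ ▸ hnext_mem _, fun η ξ hηξ ↦ ?_⟩
  calc D (F η) < bound ξ fun η _ ↦ F η := hbound ξ _ η hηξ
    _ ≤ D (F ξ) := hF ξ ▸ hnext_le _

theorem exists_forall_lt_of_not_exists_chain {β : Type*} (s : Set β) (D : β → CtblOrd)
    (R : β → β → Prop) (hR : ∀ b ∈ s, ∀ b' ∈ s, D b < D b' → R b b')
    (hchain : ¬ ∃ F : CtblOrd → β, ∀ x y, x < y → R (F x) (F y)) :
    ∃ γ, ∀ b ∈ s, D b < γ := by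
  by_contra! h
  obtain ⟨F, hFs, hF⟩ := exists_strictMono_comp_of_forall_exists_le s D h
  exact hchain ⟨F, fun x y hxy ↦ hR _ (hFs x) _ (hFs y) (hF hxy)⟩

end CtblOrd

section Separation

variable {α : Type*} {r : α → α → Prop} [IsTrans α r] [Std.Trichotomous r]

theorem rel_of_rel_of_not_rel {ξ u v : α} (hu : r ξ u) (hv : ¬ r ξ v) : r v u := by
  rcases trichotomous_of r v u with h | rfl | h
  · exact h
  · exact absurd hu hv
  · exact absurd (_root_.trans hu h) hv

theorem upper_rel_of_separates {a b b' ξ : α} (hab : r a b) (hsep : ¬ (r ξ a ↔ r ξ b))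
    (hagree : r ξ a ↔ r ξ b') : r b' b := by
  have hξa : ¬ r ξ a := fun h ↦ hsep (iff_of_true h (_root_.trans h hab))
  exact rel_of_rel_of_not_rel ((not_iff.mp hsep).mp hξa) (hξa ∘ hagree.mpr)

theorem lower_rel_of_separates {a b b' ξ : α} (hba : r b a) (hsep : ¬ (r ξ a ↔ r ξ b))
    (hagree : r ξ a ↔ r ξ b') : r b b' := by
  have hξb : ¬ r ξ b := fun h ↦ hsep (iff_of_true (_root_.trans h hba) h)
  have hξa : r ξ a := by_contra fun h ↦ hsep (iff_of_false h hξb)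
  exact rel_of_rel_of_not_rel (hagree.mp hξa) hξb

end Separation

/-- Let `A` be a short linear order `r` on the underlying set `ω₁` (no `ω₁`-increasing
and no `ω₁`-decreasing sequence), and for `a ≠ b` let `Δ a b` be the least ordinal where
the characteristic functions of the strict lower sets of `a` and `b` differ.  Then for
every `a`, the ordinal `δ_A(a) = sup {Δ(a,b)+1 : b ≠ a}` is countable, i.e. the values
`Δ a b` are bounded by some countable ordinal `γ`. -/
theorem delta_sup_countable
    (r : CtblOrd → CtblOrd → Prop) [IsStrictTotalOrder CtblOrd r]
    (hshort₁ : ¬ ∃ f : CtblOrd → CtblOrd, ∀ x y : CtblOrd, x < y → r (f x) (f y))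
    (hshort₂ : ¬ ∃ f : CtblOrd → CtblOrd, ∀ x y : CtblOrd, x < y → r (f y) (f x))
    (Δ : CtblOrd → CtblOrd → CtblOrd)
    (hΔ : ∀ a b : CtblOrd, a ≠ b →
      (¬ (r (Δ a b) a ↔ r (Δ a b) b) ∧ ∀ ξ : CtblOrd, ξ < Δ a b → (r ξ a ↔ r ξ b)))
    (a : CtblOrd) :
    ∃ γ : CtblOrd, ∀ b : CtblOrd, b ≠ a → Δ a b < γ := by
  obtain ⟨γ₁, hγ₁⟩ := CtblOrd.exists_forall_lt_of_not_exists_chain {b | r a b} (Δ a) (flip r)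
    (fun b hb b' hb' hlt ↦ upper_rel_of_separates (r := r) hb (hΔ a b (ne_of_irrefl hb)).1
      ((hΔ a b' (ne_of_irrefl hb')).2 _ hlt)) hshort₂
  obtain ⟨γ₂, hγ₂⟩ := CtblOrd.exists_forall_lt_of_not_exists_chain {b | r b a} (Δ a) r
    (fun b hb b' hb' hlt ↦ lower_rel_of_separates hb (hΔ a b (ne_of_irrefl' hb)).1
      ((hΔ a b' (ne_of_irrefl' hb')).2 _ hlt)) hshort₁
  refine ⟨max γ₁ γ₂, fun b hb ↦ ?_⟩
  rcases trichotomous_of r a b with h | rfl | h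
  · exact (hγ₁ b h).trans_le (le_max_left _ _)
  · exact absurd rfl hb
  · exact (hγ₂ b h).trans_le (le_max_right _ _)
end

section
/- If there is a monotone surjection from a linear order A onto a linear order B, then the linear order of gaps G(B) embeds into G(A). -/
/-- A gap of a linear order `L`: a pair `(X, Y)` of nonempty sets such that `X` is
exactly the set of lower bounds of `Y`, `Y` is exactly the set of upper bounds of `X`,
and `X ∩ Y = ∅`. -/
def IsGap {L : Type*} [LinearOrder L] (X Y : Set L) : Prop :=
  X.Nonempty ∧ Y.Nonempty ∧ X = {x | ∀ y ∈ Y, x ≤ y} ∧ Y = {y | ∀ x ∈ X, x ≤ y} ∧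
    X ∩ Y = ∅

lemma IsGap.lt {L : Type*} [LinearOrder L] {X Y : Set L} (h : IsGap X Y)
    {x y : L} (hx : x ∈ X) (hy : y ∈ Y) : x < y := by
  obtain ⟨-, -, hX, -, hd⟩ := h
  rcases lt_or_eq_of_le (by rw [hX] at hx; exact hx y hy) with h' | h'
  · exact h'
  · exact absurd (Set.mem_inter hx (h' ▸ hy)) (by simp [hd])

lemma IsGap.total {L : Type*} [LinearOrder L] {X Y : Set L} (h : IsGap X Y)
    (b : L) : b ∈ X ∨ b ∈ Y := by
  obtain ⟨-, -, hX, hY, -⟩ := h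
  by_cases hb : b ∈ Y
  · exact Or.inr hb
  · left
    rw [hY, Set.mem_setOf_eq] at hb
    push_neg at hb
    obtain ⟨x, hx, hxb⟩ := hb
    rw [hX]
    intro y hy
    exact le_trans hxb.le (by rw [hX] at hx; exact hx y hy)

lemma IsGap.no_min {L : Type*} [LinearOrder L] {X Y : Set L} (h : IsGap X Y)
    {y : L} (hy : y ∈ Y) : ∃ y' ∈ Y, y' < y := by
  by_contra hc
  push_neg at hc
  have : y ∈ X := by
    rw [h.2.2.1]; intro y' hy'; exact hc y' hy'
  exact absurd (Set.mem_inter this hy) (by simp [h.2.2.2.2])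

lemma IsGap.no_max {L : Type*} [LinearOrder L] {X Y : Set L} (h : IsGap X Y)
    {x : L} (hx : x ∈ X) : ∃ x' ∈ X, x < x' := by
  by_contra hc
  push_neg at hc
  have : x ∈ Y := by
    rw [h.2.2.2.1]; intro x' hx'; exact hc x' hx'
  exact absurd (Set.mem_inter hx this) (by simp [h.2.2.2.2])

lemma isGap_preimage {A B : Type*} [LinearOrder A] [LinearOrder B]
    (f : A → B) (hmono : Monotone f) (hsurj : Function.Surjective f)
    {X Y : Set B} (h : IsGap X Y) : IsGap (f ⁻¹' X) (f ⁻¹' Y) := by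
  obtain ⟨hXne, hYne, hX, hY, hd⟩ := id h
  refine ⟨?_, ?_, ?_, ?_, ?_⟩
  · obtain ⟨x, hx⟩ := hXne; obtain ⟨a, rfl⟩ := hsurj x; exact ⟨a, hx⟩
  · obtain ⟨y, hy⟩ := hYne; obtain ⟨a, rfl⟩ := hsurj y; exact ⟨a, hy⟩
  · ext a
    constructor
    · intro ha a' ha'
      by_contra hlt
      push_neg at hlt
      exact absurd (hmono hlt.le)
        (not_le_of_gt (h.lt ha ha'))
    · intro ha
      show f a ∈ X
      rcases h.total (f a) with h' | h'
      · exact h'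
      · obtain ⟨y, hy, hylt⟩ := h.no_min h'
        obtain ⟨a', rfl⟩ := hsurj y
        exact absurd (hmono (ha a' hy)) (not_le_of_gt hylt)
  · ext a
    constructor
    · intro ha a' ha'
      by_contra hlt
      push_neg at hlt
      exact absurd (hmono hlt.le) (not_le_of_gt (h.lt ha' ha))
    · intro ha
      show f a ∈ Y
      rcases h.total (f a) with h' | h'
      · obtain ⟨x, hx, hxlt⟩ := h.no_max h'
        obtain ⟨a', rfl⟩ := hsurj x
        exact absurd (hmono (ha a' hx)) (not_le_of_gt hxlt)
      · exact h'
  · ext a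
    simp only [Set.mem_inter_iff, Set.mem_preimage, Set.mem_empty_iff_false, iff_false]
    intro ⟨h1, h2⟩
    exact absurd (Set.mem_inter h1 h2) (by simp [hd])

/-- If there is a monotone surjection from `A` onto `B`, then the linear order of gaps of
`B` (ordered by inclusion of first components) embeds (as a monotone injection) into the
linear order of gaps of `A`. -/
theorem gaps_embed_of_epi {A B : Type*} [LinearOrder A] [LinearOrder B]
    (f : A → B) (hmono : Monotone f) (hsurj : Function.Surjective f) :
    ∃ e : {p : Set B × Set B // IsGap p.1 p.2} → {p : Set A × Set A // IsGap p.1 p.2},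
      Function.Injective e ∧
      ∀ g g' : {p : Set B × Set B // IsGap p.1 p.2},
        g.1.1 ⊆ g'.1.1 → (e g).1.1 ⊆ (e g').1.1 := by
  refine ⟨fun g => ⟨(f ⁻¹' g.1.1, f ⁻¹' g.1.2), isGap_preimage f hmono hsurj g.2⟩, ?_, ?_⟩
  · intro g g' hgg
    have h1 : f ⁻¹' g.1.1 = f ⁻¹' g'.1.1 := congrArg (·.1.1) hgg
    have hX : g.1.1 = g'.1.1 := by
      rw [← Set.image_preimage_eq g.1.1 hsurj, ← Set.image_preimage_eq g'.1.1 hsurj, h1]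
    have hY : g.1.2 = g'.1.2 := by
      rw [g.2.2.2.2.1, g'.2.2.2.2.1, hX]
    exact Subtype.ext (Prod.ext hX hY)
  · intro g g' hsub a ha
    exact hsub ha
end

section
/- Let A ⊆ ℝ with |ℝ \ A| < 𝔠 (continuum), and suppose there is a monotone surjection from A (with the order induced from ℝ) onto a linear order B that is a subset of ℝ. Then B is countable or |B| = 𝔠. -/
open Set Cardinal

/-- Points of `D` that are not left limit points of `D` form a countable set. -/
lemma aux_countable_not_left_limit (D : Set ℝ) :
    {p | p ∈ D ∧ p ∉ closure (D ∩ Set.Iio p)}.Countable := by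
  have hsub : {p | p ∈ D ∧ p ∉ closure (D ∩ Set.Iio p)} ⊆
      ⋃ q : ℚ, {p | p ∈ D ∧ (q : ℝ) < p ∧ D ∩ Set.Ioo (q : ℝ) p = ∅} := by
    rintro p ⟨hpD, hpc⟩
    rw [Metric.mem_closure_iff] at hpc
    push_neg at hpc
    obtain ⟨ε, hε, hb⟩ := hpc
    obtain ⟨q, hq1, hq2⟩ := exists_rat_btwn (show p - ε < p by linarith)
    refine Set.mem_iUnion.mpr ⟨q, hpD, hq2, ?_⟩
    ext x
    simp only [Set.mem_inter_iff, Set.mem_Ioo, Set.mem_empty_iff_false, iff_false, not_and]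
    intro hxD hx1 hx2
    have h := hb x ⟨hxD, hx2⟩
    rw [Real.dist_eq, abs_of_nonneg (by linarith)] at h
    linarith
  refine Set.Countable.mono hsub (Set.countable_iUnion fun q => ?_)
  apply Set.Subsingleton.countable
  rintro p1 ⟨h1D, h1q, h1e⟩ p2 ⟨h2D, h2q, h2e⟩
  by_contra hne
  rcases lt_or_gt_of_ne hne with h | h
  · have : p1 ∈ D ∩ Set.Ioo (q : ℝ) p2 := ⟨h1D, h1q, h⟩
    rw [h2e] at this; exact this
  · have : p2 ∈ D ∩ Set.Ioo (q : ℝ) p1 := ⟨h2D, h2q, h⟩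
    rw [h1e] at this; exact this

/-- Points of `D` that are not right limit points of `D` form a countable set. -/
lemma aux_countable_not_right_limit (D : Set ℝ) :
    {p | p ∈ D ∧ p ∉ closure (D ∩ Set.Ioi p)}.Countable := by
  have hsub : {p | p ∈ D ∧ p ∉ closure (D ∩ Set.Ioi p)} ⊆
      ⋃ q : ℚ, {p | p ∈ D ∧ p < (q : ℝ) ∧ D ∩ Set.Ioo p (q : ℝ) = ∅} := by
    rintro p ⟨hpD, hpc⟩
    rw [Metric.mem_closure_iff] at hpc
    push_neg at hpc
    obtain ⟨ε, hε, hb⟩ := hpc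
    obtain ⟨q, hq1, hq2⟩ := exists_rat_btwn (show p < p + ε by linarith)
    refine Set.mem_iUnion.mpr ⟨q, hpD, hq1, ?_⟩
    ext x
    simp only [Set.mem_inter_iff, Set.mem_Ioo, Set.mem_empty_iff_false, iff_false, not_and]
    intro hxD hx1 hx2
    have h := hb x ⟨hxD, hx1⟩
    rw [Real.dist_eq, abs_of_nonpos (by linarith), neg_sub] at h
    linarith
  refine Set.Countable.mono hsub (Set.countable_iUnion fun q => ?_)
  apply Set.Subsingleton.countable
  rintro p1 ⟨h1D, h1q, h1e⟩ p2 ⟨h2D, h2q, h2e⟩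
  by_contra hne
  rcases lt_or_gt_of_ne hne with h | h
  · have : p2 ∈ D ∩ Set.Ioo p1 (q : ℝ) := ⟨h2D, h, h2q⟩
    rw [h1e] at this; exact this
  · have : p1 ∈ D ∩ Set.Ioo p2 (q : ℝ) := ⟨h1D, h, h1q⟩
    rw [h2e] at this; exact this

/-- If `p` is a left limit of `D` and `D ⊆ closure B`, then `B` accumulates at `p` from the
left. -/
lemma aux_left_acc {B D : Set ℝ} (hDB : D ⊆ closure B) {p : ℝ}
    (hp : p ∈ closure (D ∩ Set.Iio p)) : ∀ ε > 0, ∃ b ∈ B, p - ε < b ∧ b < p := by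
  intro ε hε
  rw [Metric.mem_closure_iff] at hp
  obtain ⟨d, ⟨hdD, hdp⟩, hdist⟩ := hp ε hε
  rw [Set.mem_Iio] at hdp
  rw [Real.dist_eq, abs_of_nonneg (by linarith)] at hdist
  have hd1 : p - ε < d := by linarith
  have hδ : (0:ℝ) < min (p - d) (d - (p - ε)) := lt_min (by linarith) (by linarith)
  obtain ⟨b, hbB, hbd⟩ := Metric.mem_closure_iff.mp (hDB hdD) _ hδ
  rw [Real.dist_eq, abs_lt] at hbd
  have h1 := hbd.1
  have h2 := hbd.2
  have hm1 : min (p - d) (d - (p - ε)) ≤ p - d := min_le_left _ _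
  have hm2 : min (p - d) (d - (p - ε)) ≤ d - (p - ε) := min_le_right _ _
  exact ⟨b, hbB, by linarith, by linarith⟩

/-- If `p` is a right limit of `D` and `D ⊆ closure B`, then `B` accumulates at `p` from the
right. -/
lemma aux_right_acc {B D : Set ℝ} (hDB : D ⊆ closure B) {p : ℝ}
    (hp : p ∈ closure (D ∩ Set.Ioi p)) : ∀ ε > 0, ∃ b ∈ B, p < b ∧ b < p + ε := by
  intro ε hε
  rw [Metric.mem_closure_iff] at hp
  obtain ⟨d, ⟨hdD, hdp⟩, hdist⟩ := hp ε hε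
  rw [Set.mem_Ioi] at hdp
  rw [Real.dist_eq, abs_of_nonpos (by linarith), neg_sub] at hdist
  have hδ : (0:ℝ) < min (d - p) ((p + ε) - d) := lt_min (by linarith) (by linarith)
  obtain ⟨b, hbB, hbd⟩ := Metric.mem_closure_iff.mp (hDB hdD) _ hδ
  rw [Real.dist_eq, abs_lt] at hbd
  have h1 := hbd.1
  have h2 := hbd.2
  have hm1 : min (d - p) ((p + ε) - d) ≤ d - p := min_le_left _ _
  have hm2 : min (d - p) ((p + ε) - d) ≤ (p + ε) - d := min_le_right _ _
  exact ⟨b, hbB, by linarith, by linarith⟩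

/-- The preimage (as a set of reals) of the part of `B` below `p`. -/
def auxS {A B : Set ℝ} (f : A → B) (p : ℝ) : Set ℝ :=
  {x | ∃ h : x ∈ A, ((f ⟨x, h⟩ : ℝ)) < p}

lemma auxS_nonempty {A B : Set ℝ} (f : A → B) (hsurj : Function.Surjective f) {p b : ℝ}
    (hb : b ∈ B) (hbp : b < p) : (auxS f p).Nonempty := by
  obtain ⟨x, hx⟩ := hsurj ⟨b, hb⟩
  refine ⟨(x : ℝ), x.2, ?_⟩
  rw [Subtype.coe_eta, hx]
  exact hbp

lemma auxS_upper {A B : Set ℝ} {f : A → B} (hmono : Monotone f) {p : ℝ} (x : A)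
    (hx : p < (f x : ℝ)) : (x : ℝ) ∈ upperBounds (auxS f p) := by
  rintro a ⟨ha, hfa⟩
  by_contra hlt
  push_neg at hlt
  have hle : x ≤ ⟨a, ha⟩ := Subtype.coe_le_coe.mp (le_of_lt hlt)
  have := hmono hle
  rw [← Subtype.coe_le_coe] at this
  exact absurd (lt_trans hx (lt_of_le_of_lt this hfa)) (lt_irrefl p)

lemma auxS_sSup_not_mem {A B : Set ℝ} {f : A → B} (hmono : Monotone f)
    (hsurj : Function.Surjective f) {p : ℝ} (hpB : p ∉ B)
    (hl : ∀ ε > 0, ∃ b ∈ B, p - ε < b ∧ b < p)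
    (hr : ∀ ε > 0, ∃ b ∈ B, p < b ∧ b < p + ε) :
    sSup (auxS f p) ∉ A := by
  obtain ⟨b0, hb0B, _, hb0p⟩ := hl 1 one_pos
  have hne : (auxS f p).Nonempty := auxS_nonempty f hsurj hb0B hb0p
  obtain ⟨b1, hb1B, hb1p, _⟩ := hr 1 one_pos
  obtain ⟨x1, hx1⟩ := hsurj ⟨b1, hb1B⟩
  have hbdd : BddAbove (auxS f p) :=
    ⟨(x1 : ℝ), auxS_upper hmono x1 (by rw [hx1]; exact hb1p)⟩
  intro hmem
  set r := sSup (auxS f p) with hr_def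
  rcases lt_trichotomy ((f ⟨r, hmem⟩ : ℝ)) p with hfr | hfr | hfr
  · -- f r < p : find b ∈ B with f r < b < p, its preimage exceeds r
    obtain ⟨b, hbB, hb1, hb2⟩ := hl (p - (f ⟨r, hmem⟩ : ℝ)) (by linarith)
    obtain ⟨x, hx⟩ := hsurj ⟨b, hbB⟩
    have hxS : (x : ℝ) ∈ auxS f p := by
      refine ⟨x.2, ?_⟩
      rw [Subtype.coe_eta, hx]
      exact hb2
    have hxr : (x : ℝ) ≤ r := le_csSup hbdd hxS
    have hle : x ≤ ⟨r, hmem⟩ := Subtype.coe_le_coe.mp hxr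
    have := hmono hle
    rw [← Subtype.coe_le_coe, hx] at this
    simp only at this
    linarith
  · exact hpB (hfr ▸ (f ⟨r, hmem⟩).2)
  · -- p < f r : find b ∈ B with p < b < f r, its preimage is an upper bound below r
    obtain ⟨b, hbB, hb1, hb2⟩ := hr ((f ⟨r, hmem⟩ : ℝ) - p) (by linarith)
    obtain ⟨x, hx⟩ := hsurj ⟨b, hbB⟩
    have hub : (x : ℝ) ∈ upperBounds (auxS f p) :=
      auxS_upper hmono x (by rw [hx]; exact hb1)
    have hrx : r ≤ (x : ℝ) := csSup_le hne hub
    have hle : (⟨r, hmem⟩ : A) ≤ x := Subtype.coe_le_coe.mp hrx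
    have := hmono hle
    rw [← Subtype.coe_le_coe, hx] at this
    simp only at this
    linarith

lemma auxS_sSup_lt {A B : Set ℝ} {f : A → B} (hmono : Monotone f)
    (hsurj : Function.Surjective f) {p p' : ℝ} (hpp' : p < p')
    (hnotA : sSup (auxS f p) ∉ A)
    (hl : ∀ ε > 0, ∃ b ∈ B, p - ε < b ∧ b < p)
    (hr : ∀ ε > 0, ∃ b ∈ B, p < b ∧ b < p + ε)
    (hr' : ∀ ε > 0, ∃ b ∈ B, p' < b ∧ b < p' + ε) :
    sSup (auxS f p) < sSup (auxS f p') := by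
  obtain ⟨b0, hb0B, _, hb0p⟩ := hl 1 one_pos
  have hne : (auxS f p).Nonempty := auxS_nonempty f hsurj hb0B hb0p
  obtain ⟨b1, hb1B, hb1p, _⟩ := hr' 1 one_pos
  obtain ⟨x1, hx1⟩ := hsurj ⟨b1, hb1B⟩
  have hbdd' : BddAbove (auxS f p') :=
    ⟨(x1 : ℝ), auxS_upper hmono x1 (by rw [hx1]; exact hb1p)⟩
  -- pick b ∈ B with p < b < p'
  obtain ⟨b, hbB, hb1, hb2⟩ := hr (p' - p) (by linarith)
  obtain ⟨x, hx⟩ := hsurj ⟨b, hbB⟩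
  have h1 : sSup (auxS f p) ≤ (x : ℝ) :=
    csSup_le hne (auxS_upper hmono x (by rw [hx]; exact hb1))
  have h2 : (x : ℝ) ≤ sSup (auxS f p') := by
    refine le_csSup hbdd' ⟨x.2, ?_⟩
    rw [Subtype.coe_eta, hx]
    simpa using hb2
  rcases lt_or_eq_of_le (le_trans h1 h2) with h | h
  · exact h
  · exfalso
    have hxeq : (x : ℝ) = sSup (auxS f p) := le_antisymm (h ▸ h2) h1
    exact hnotA (hxeq ▸ x.2)

/-- If `A ⊆ ℝ` has co-small complement (`|ℝ \ A| < 𝔠`) and there is a monotone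
surjection from `A` onto `B ⊆ ℝ`, then `B` is countable or of size continuum. -/
theorem epi_image_countable_or_continuum (A B : Set ℝ)
    (hA : Cardinal.mk ↥(Aᶜ) < Cardinal.continuum)
    (f : A → B) (hmono : Monotone f) (hsurj : Function.Surjective f) :
    B.Countable ∨ Cardinal.mk ↥B = Cardinal.continuum := by
  by_cases hB : B.Countable
  · exact Or.inl hB
  right
  -- closure of B is uncountable and closed
  have hKu : ¬ (closure B).Countable := fun hc => hB (hc.mono subset_closure)
  obtain ⟨D, hD, hDne, hDK⟩ :=
    exists_perfect_nonempty_of_isClosed_of_not_countable isClosed_closure hKu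
  -- D has size continuum
  obtain ⟨g, hgr, _, hgi⟩ := hD.exists_nat_bool_injection hDne
  have hcantor : #(ℕ → Bool) = continuum := by
    rw [Cardinal.mk_arrow, Cardinal.mk_bool, Cardinal.mk_nat, Cardinal.lift_aleph0,
      Cardinal.continuum, Cardinal.lift_ofNat]
  have hDcard : continuum ≤ #↥D := by
    have h := Cardinal.mk_le_of_injective
      (f := fun x : ℕ → Bool => (⟨g x, hgr (Set.mem_range_self x)⟩ : ↥D))
      (fun a b h => hgi (congrArg Subtype.val h))
    rwa [hcantor] at h
  -- two-sided limit points of D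
  set D₂ : Set ℝ :=
    {p | p ∈ D ∧ p ∈ closure (D ∩ Set.Iio p) ∧ p ∈ closure (D ∩ Set.Ioi p)} with hD₂def
  have hbad : (D \ D₂).Countable := by
    refine Set.Countable.mono ?_
      ((aux_countable_not_left_limit D).union (aux_countable_not_right_limit D))
    rintro p ⟨hpD, hp2⟩
    rw [hD₂def] at hp2
    simp only [Set.mem_setOf_eq, not_and] at hp2
    by_cases h1 : p ∈ closure (D ∩ Set.Iio p)
    · exact Or.inr ⟨hpD, fun h2 => (hp2 hpD h1) h2⟩
    · exact Or.inl ⟨hpD, h1⟩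
  -- cardinal arithmetic helper
  have haux : ∀ (a b : Cardinal), continuum ≤ a + b → b < continuum → continuum ≤ a := by
    intro a b h hb
    by_contra h'
    exact absurd h (not_le.mpr (Cardinal.add_lt_of_lt Cardinal.aleph0_le_continuum
      (not_le.mp h') hb))
  have hbadcard : #↥(D \ D₂) < continuum :=
    lt_of_le_of_lt (Cardinal.mk_le_aleph0_iff.mpr hbad.to_subtype) Cardinal.aleph0_lt_continuum
  have hD2card : continuum ≤ #↥D₂ := by
    have hsub : D ⊆ D₂ ∪ (D \ D₂) := fun x hx => by
      by_cases h : x ∈ D₂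
      · exact Or.inl h
      · exact Or.inr ⟨hx, h⟩
    have h1 : continuum ≤ #↥(D₂ ∪ (D \ D₂)) :=
      le_trans hDcard (Cardinal.mk_le_mk_of_subset hsub)
    exact haux _ _ (le_trans h1 (Cardinal.mk_union_le _ _)) hbadcard
  -- gaps of B at points of D₂ \ B give points of Aᶜ
  have hDcl : D ⊆ closure B := hDK
  have hkey : ∀ p ∈ D₂, p ∉ B → sSup (auxS f p) ∉ A := by
    rintro p ⟨_, hpl, hpr⟩ hpB
    exact auxS_sSup_not_mem hmono hsurj hpB (aux_left_acc hDcl hpl) (aux_right_acc hDcl hpr)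
  have hmonoS : ∀ p ∈ D₂, ∀ p' ∈ D₂, p ∉ B → p < p' →
      sSup (auxS f p) < sSup (auxS f p') := by
    rintro p ⟨hpD, hpl, hpr⟩ p' ⟨hpD', hpl', hpr'⟩ hpB hpp'
    exact auxS_sSup_lt hmono hsurj hpp' (hkey p ⟨hpD, hpl, hpr⟩ hpB)
      (aux_left_acc hDcl hpl) (aux_right_acc hDcl hpr) (aux_right_acc hDcl hpr')
  -- inject D₂ \ B into Aᶜ
  have hinj : #↥(D₂ \ B) ≤ #↥(Aᶜ) := by
    refine Cardinal.mk_le_of_injective (f := fun p : ↥(D₂ \ B) =>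
      (⟨sSup (auxS f (p : ℝ)), hkey (p : ℝ) p.2.1 p.2.2⟩ : ↥(Aᶜ))) ?_
    intro p q h
    have h' : sSup (auxS f (p : ℝ)) = sSup (auxS f (q : ℝ)) := congrArg Subtype.val h
    rcases lt_trichotomy (p : ℝ) (q : ℝ) with hlt | heq | hgt
    · exact absurd h' (ne_of_lt (hmonoS _ p.2.1 _ q.2.1 p.2.2 hlt))
    · exact Subtype.ext heq
    · exact absurd h'.symm (ne_of_lt (hmonoS _ q.2.1 _ p.2.1 q.2.2 hgt))
  -- conclude
  have hsub2 : D₂ ⊆ (D₂ \ B) ∪ B := fun x hx => by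
    by_cases h : x ∈ B
    · exact Or.inr h
    · exact Or.inl ⟨hx, h⟩
  have hsum : continuum ≤ #↥(D₂ \ B) + #↥B :=
    le_trans (le_trans hD2card (Cardinal.mk_le_mk_of_subset hsub2)) (Cardinal.mk_union_le _ _)
  rw [add_comm] at hsum
  exact le_antisymm (Cardinal.mk_real ▸ Cardinal.mk_set_le B)
    (haux _ _ hsum (lt_of_le_of_lt hinj hA))
end

section
/- Let Q be a countable dense suborder of an uncountable linear order B (dense meaning for all x < y in B, [x,y] ∩ Q ≠ ∅). If |B| < 𝔠, then the set of gaps of B has cardinality at least 𝔠. -/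
open Cardinal Set Function

namespace LowerSet

section Countable

variable {α : Type*} [Preorder α]

open scoped Classical in
noncomputable def equivAntitoneBool : LowerSet α ≃ {f : α → Bool // Antitone f} where
  toFun s := ⟨fun a => decide (a ∈ s),
    fun _ _ hab => Bool.le_iff_imp.2 (by simpa using s.lower hab)⟩
  invFun f := ⟨{a | f.1 a}, fun _ _ hba ha => Bool.le_iff_imp.1 (f.2 hba) ha⟩
  left_inv s := by ext; simp
  right_inv f := by ext a; exact Bool.eq_iff_iff.2 (decide_eq_true_iff.trans Iff.rfl)

theorem isClosed_setOf_antitone_bool : IsClosed {f : α → Bool | Antitone f} := by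
  simp only [Antitone, ofPred_forall]
  exact isClosed_iInter fun a => isClosed_iInter fun b => isClosed_iInter fun _ =>
    (isClosed_discrete {p : Bool × Bool | p.1 ≤ p.2}).preimage
      (f := fun f : α → Bool => (f b, f a)) (by fun_prop)

theorem continuum_le_mk_of_not_countable [Countable α] (h : ¬ Countable (LowerSet α)) :
    𝔠 ≤ #(LowerSet α) := by
  have : PolishSpace Bool := {}
  have hunc : ¬ {f : α → Bool | Antitone f}.Countable := fun hc =>
    h (equivAntitoneBool.countable_iff.2 hc.to_subtype)
  obtain ⟨g, hgC, -, hg⟩ :=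
    isClosed_setOf_antitone_bool.exists_nat_bool_injection_of_not_countable hunc
  have := lift_mk_le_lift_mk_of_injective (f := fun x => (⟨g x, hgC ⟨x, rfl⟩⟩ :
    {f : α → Bool // Antitone f})) fun x y hxy => hg (congrArg Subtype.val hxy)
  rw [mk_congr equivAntitoneBool]
  simpa using this

end Countable

section Subset

variable {B : Type*}

theorem lowerClosure_image_val_injective [Preorder B] (Q : Set B) :
    Injective fun s : LowerSet Q => lowerClosure (Subtype.val '' (s : Set Q)) := by
  intro s t hst
  dsimp only at hst
  ext q
  have key : ∀ s : LowerSet Q, (q : B) ∈ lowerClosure (Subtype.val '' (s : Set Q)) ↔ q ∈ s :=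
    fun s => ⟨fun ⟨_, ⟨r, hr, hrq⟩, hqr⟩ => s.lower (hrq ▸ hqr : (q : B) ≤ r) hr,
      fun hq => subset_lowerClosure ⟨q, hq, rfl⟩⟩
  rw [SetLike.mem_coe, SetLike.mem_coe, ← key s, ← key t, hst]

theorem not_countable_of_dense [LinearOrder B] {Q : Set B} (hB : ¬ Countable B)
    (hQd : ∀ x y : B, x < y → ∃ q ∈ Q, x ≤ q ∧ q ≤ y) : ¬ Countable (LowerSet Q) := by
  intro hQ
  let cuts : B → LowerSet Q × LowerSet Q := fun b =>
    (⟨Subtype.val ⁻¹' Iic b, (isLowerSet_Iic b).preimage (Subtype.mono_coe _)⟩,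
      ⟨Subtype.val ⁻¹' Iio b, (isLowerSet_Iio b).preimage (Subtype.mono_coe _)⟩)
  suffices hinj : Injective cuts from hB hinj.countable
  -- a point `q ∈ Q ∩ [b, b']` separates `Iio b` from `Iio b'` unless `q = b'`,
  -- in which case it separates `Iic b` from `Iic b'`
  have hsep : ∀ b b', b < b' → cuts b ≠ cuts b' := by
    intro b b' hlt heq
    obtain ⟨q, hq, hbq, hqb'⟩ := hQd b b' hlt
    rcases hqb'.lt_or_eq with hqb' | rfl
    · have : (⟨q, hq⟩ : Q) ∈ (cuts b).2 := by rw [heq]; exact hqb'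
      exact (not_lt_of_ge hbq) this
    · have : (⟨q, hq⟩ : Q) ∈ (cuts b).1 := by rw [heq]; exact le_rfl
      exact (not_le_of_gt hlt) this
  intro b b' heq
  by_contra hne
  rcases lt_or_gt_of_ne hne with hlt | hlt
  exacts [hsep b b' hlt heq, hsep b' b hlt heq.symm]

end Subset

end LowerSet

section Gaps

variable {B : Type*} [LinearOrder B]

theorem LowerSet.isGap_compl {X : LowerSet B} (hbot : X ≠ ⊥) (htop : X ≠ ⊤)
    (hIic : ∀ b, X ≠ LowerSet.Iic b) (hIio : ∀ b, X ≠ LowerSet.Iio b) :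
    IsGap (X : Set B) (X : Set B)ᶜ := by
  refine ⟨nonempty_iff_ne_empty.2 (LowerSet.coe_eq_empty.not.2 hbot),
    nonempty_compl.2 (LowerSet.coe_eq_univ.not.2 htop), ?_, ?_, inter_compl_self _⟩
  · ext x
    refine ⟨fun hx y hy => le_of_not_gt fun hyx => hy (X.lower hyx.le hx), fun hx => ?_⟩
    by_contra hxX
    refine hIio x (SetLike.ext fun y => ⟨fun hy => ?_, fun hyx => ?_⟩)
    · exact lt_of_not_ge fun hxy => hxX (X.lower hxy hy)
    · by_contra hyX
      exact (hx y hyX).not_gt hyx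
  · ext y
    refine ⟨fun hy x hx => le_of_not_gt fun hyx => hy (X.lower hyx.le hx), fun hy hyX => ?_⟩
    exact hIic y (SetLike.ext fun x => ⟨fun hx => hy x hx, fun hxy => X.lower hxy hyX⟩)

theorem continuum_le_mk_gaps (hB : #B < 𝔠) (hL : 𝔠 ≤ #(LowerSet B)) :
    𝔠 ≤ #{p : Set B × Set B // IsGap p.1 p.2} := by
  let N : Set (LowerSet B) := {⊥, ⊤} ∪ range LowerSet.Iic ∪ range LowerSet.Iio
  have hN : #N < 𝔠 := by
    have hpair : #({⊥, ⊤} : Set (LowerSet B)) < 𝔠 :=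
      (toFinite _).lt_aleph0.trans aleph0_lt_continuum
    refine (mk_union_le _ _).trans_lt (add_lt_of_lt aleph0_le_continuum
      ((mk_union_le _ _).trans_lt (add_lt_of_lt aleph0_le_continuum hpair ?_)) ?_)
    exacts [mk_range_le.trans_lt hB, mk_range_le.trans_lt hB]
  have : Infinite (LowerSet B) := infinite_iff.2 (aleph0_le_continuum.trans hL)
  have hgap : ∀ X ∈ Nᶜ, IsGap (X : Set B) (X : Set B)ᶜ := by
    intro X hX
    simp only [N, mem_compl_iff, mem_union, mem_insert_iff, mem_singleton_iff, mem_range,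
      not_or, not_exists] at hX
    exact LowerSet.isGap_compl hX.1.1.1 hX.1.1.2 (fun b h => hX.1.2 b h.symm)
      (fun b h => hX.2 b h.symm)
  calc 𝔠 ≤ #(Nᶜ : Set (LowerSet B)) := by rw [mk_compl_of_infinite N (hN.trans_le hL)]; exact hL
    _ ≤ #{p : Set B × Set B // IsGap p.1 p.2} :=
      mk_le_of_injective (f := fun X => ⟨((X : Set B), (X : Set B)ᶜ), hgap X X.2⟩)
        fun X Y hXY => Subtype.ext (SetLike.coe_injective (congrArg (·.1.1) hXY))

end Gaps

/-- If `B` is an uncountable linear order of size less than the continuum with a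
countable dense suborder `Q`, then `B` has at least continuum many gaps. -/
theorem gaps_of_small_order_with_countable_dense {B : Type*} [LinearOrder B]
    (hB : ¬ Countable B) (Q : Set B) (hQc : Q.Countable)
    (hQd : ∀ x y : B, x < y → ∃ q ∈ Q, x ≤ q ∧ q ≤ y)
    (hcard : Cardinal.mk B < Cardinal.continuum) :
    Cardinal.continuum ≤ Cardinal.mk {p : Set B × Set B // IsGap p.1 p.2} := by
  have : Countable Q := hQc.to_subtype
  have hQ : 𝔠 ≤ #(LowerSet Q) :=
    LowerSet.continuum_le_mk_of_not_countable (LowerSet.not_countable_of_dense hB hQd)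
  exact continuum_le_mk_gaps hcard
    (hQ.trans (mk_le_of_injective (LowerSet.lowerClosure_image_val_injective Q)))
end
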